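/- arXiv:2509.09945 — 5 statements merged into one kernel-verified Lean document; each statement's English description precedes it below -/
import Mathlib

section
/- Let α ∈ [0,1] be irrational and let 0 < δ ≤ ∞. Then for every s > 1, the ω_s-Hausdorff measure of the exact resonance level set D(δ) vanishes: ℋ^{ω_s}(D(δ)) = 0. -/
/-!
A point of `D(δ)` is either of the form `kα + m`, and there are countably many of those while
`ω_s(r) → 0` as `r → 0`, or, for a fixed `c > 0` with `2c < δ`, it satisfies
`‖x - kα‖ < e^{-c|k|}/2` for infinitely many `k`. A point of `[0,1]` with that property lies
in one of three intervals of length `e^{-c|k|}` centred on `kα + ℤ`, and for `s > 1` the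
`ω_s`-masses `(c|k|)^{-s}` of these intervals are summable. Discarding finitely many of them
leaves a cover of such points by short intervals of arbitrarily small total mass, as in the
Borel–Cantelli lemma.
-/

open Filter MeasureTheory Set
open scoped ENNReal NNReal Classical

/-- Distance from `x : ℝ` to the nearest integer, i.e. `‖x‖_{ℝ/ℤ}`. -/
noncomputable def distZ (x : ℝ) : ℝ := |x - round x|

/-- The `ω`-Hausdorff measure of a set `S ⊆ ℝ`: the limit as `ε → 0⁺` (equivalently the
supremum over `ε > 0`, by monotonicity) of the infimum of `∑ᵢ ω (bᵢ - aᵢ)` over countable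
covers of `S` by intervals `(aᵢ, bᵢ)` of length at most `ε`. -/
noncomputable def gaugeHaus (ω : ℝ → ℝ) (S : Set ℝ) : ℝ≥0∞ :=
  ⨆ (ε : ℝ) (_ : 0 < ε),
    ⨅ (a : ℕ → ℝ) (b : ℕ → ℝ) (_ : S ⊆ ⋃ i, Set.Ioo (a i) (b i))
      (_ : ∀ i, a i ≤ b i ∧ b i - a i ≤ ε),
      ∑' i, ENNReal.ofReal (ω (b i - a i))

/-- The gauge function `ω_s(r) = (-log r)^{-s}` for `0 < r < 1`, and `ω_s(0) = 0`. -/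
noncomputable def omegaS (s : ℝ) (r : ℝ) : ℝ := if 0 < r then (-Real.log r) ^ (-s) else 0

/-- The resonance strength `δ(α, x) = limsup_{|k| → ∞} (-log ‖x - kα‖_{ℝ/ℤ}) / |k|`,
with the convention that it is `∞` when `x ≡ kα (mod ℤ)` for some `k ∈ ℤ`. -/

noncomputable def resStrength (α x : ℝ) : ℝ≥0∞ :=
  if ∃ k m : ℤ, x = (k : ℝ) * α + (m : ℝ) then ⊤
  else Filter.limsup
    (fun k : ℤ => ENNReal.ofReal (-Real.log (distZ (x - (k : ℝ) * α)) / |(k : ℝ)|))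
    Filter.cofinite

/-- The exact resonance level set `D(δ) = {x ∈ [0,1] : δ(α,x) = δ}`. -/
noncomputable def resSet (α : ℝ) (δ : ℝ≥0∞) : Set ℝ :=
  {x ∈ Set.Icc (0 : ℝ) 1 | resStrength α x = δ}

open Filter Topology

def GaugeNull (ω : ℝ → ℝ) (S : Set ℝ) : Prop :=
  ∀ ε > 0, ∀ η > (0 : ℝ≥0∞), ∃ a b : ℕ → ℝ, S ⊆ (⋃ i, Ioo (a i) (b i)) ∧
    (∀ i, a i ≤ b i ∧ b i - a i ≤ ε) ∧ ∑' i, ENNReal.ofReal (ω (b i - a i)) ≤ η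

namespace GaugeNull

variable {ω : ℝ → ℝ} {S T : Set ℝ}

theorem gaugeHaus_eq_zero (h : GaugeNull ω S) : gaugeHaus ω S = 0 := by
  refine nonpos_iff_eq_zero.mp (iSup₂_le fun ε hε => le_of_forall_gt_imp_ge_of_dense fun η hη => ?_)
  obtain ⟨a, b, hcov, hlen, hsum⟩ := h ε hε η hη
  exact iInf_le_of_le a (iInf_le_of_le b (iInf_le_of_le hcov (iInf_le_of_le hlen hsum)))

theorem mono (hT : GaugeNull ω T) (hST : S ⊆ T) : GaugeNull ω S := fun ε hε η hη =>
  let ⟨a, b, hcov, h⟩ := hT ε hε η hη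
  ⟨a, b, hST.trans hcov, h⟩

theorem union (hS : GaugeNull ω S) (hT : GaugeNull ω T) : GaugeNull ω (S ∪ T) := by
  intro ε hε η hη
  obtain ⟨a, b, hcov, hlen, hsum⟩ := hS ε hε (η / 2) (ENNReal.half_pos hη.ne')
  obtain ⟨a', b', hcov', hlen', hsum'⟩ := hT ε hε (η / 2) (ENNReal.half_pos hη.ne')
  let e := Equiv.natSumNatEquivNat.symm
  refine ⟨fun n => Sum.elim a a' (e n), fun n => Sum.elim b b' (e n), ?_, fun n => ?_, ?_⟩
  · rintro x (hx | hx)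
    · obtain ⟨i, hi⟩ := mem_iUnion.mp (hcov hx)
      exact mem_iUnion.mpr ⟨e.symm (.inl i), by simpa using hi⟩
    · obtain ⟨i, hi⟩ := mem_iUnion.mp (hcov' hx)
      exact mem_iUnion.mpr ⟨e.symm (.inr i), by simpa using hi⟩
  · dsimp only
    rcases e n with i | i
    exacts [hlen i, hlen' i]
  · calc ∑' n, ENNReal.ofReal (ω (Sum.elim b b' (e n) - Sum.elim a a' (e n)))
        = ∑' p, ENNReal.ofReal (ω (Sum.elim b b' p - Sum.elim a a' p)) :=
          e.tsum_eq fun p => ENNReal.ofReal (ω (Sum.elim b b' p - Sum.elim a a' p))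
      _ = (∑' i, ENNReal.ofReal (ω (b i - a i))) + ∑' i, ENNReal.ofReal (ω (b' i - a' i)) :=
          Summable.tsum_sum ENNReal.summable ENNReal.summable
      _ ≤ η / 2 + η / 2 := add_le_add hsum hsum'
      _ = η := ENNReal.add_halves η

end GaugeNull

section Covers

variable {ω : ℝ → ℝ}

theorem gaugeNull_of_countable (hω : Tendsto ω (𝓝[>] 0) (𝓝 0)) {S : Set ℝ} (hS : S.Countable) :
    GaugeNull ω S := by
  intro ε hε η hη
  obtain ⟨f, hf⟩ := Set.countable_iff_exists_subset_range.mp hS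
  obtain ⟨η', hη'0, hη'⟩ := ENNReal.exists_pos_sum_of_countable hη.ne' ℕ
  have hℓ (n : ℕ) : ∃ ℓ, ℓ ∈ Ioc 0 ε ∧ ω ℓ < η' n :=
    (Eventually.and (Ioc_mem_nhdsGT hε)
      (hω.eventually (gt_mem_nhds (NNReal.coe_pos.mpr (hη'0 n))))).exists
  choose ℓ hℓ hωℓ using hℓ
  refine ⟨fun n => f n - ℓ n / 2, fun n => f n + ℓ n / 2, ?_,
    fun n => ⟨by linarith [(hℓ n).1], by linarith [(hℓ n).2]⟩, ?_⟩
  · intro x hx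
    obtain ⟨n, rfl⟩ := hf hx
    exact mem_iUnion.mpr ⟨n, by constructor <;> linarith [(hℓ n).1]⟩
  · calc ∑' n, ENNReal.ofReal (ω (f n + ℓ n / 2 - (f n - ℓ n / 2)))
        ≤ ∑' n, (η' n : ℝ≥0∞) := ENNReal.tsum_le_tsum fun n => by
          rw [add_sub_sub_cancel, add_halves]
          exact ENNReal.ofReal_le_of_le_toReal (hωℓ n).le
      _ ≤ η := hη'.le

theorem gaugeNull_setOf_frequently_atTop_mem_Ioo {a b : ℕ → ℝ} (hab : ∀ n, a n ≤ b n)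
    (hlen : Tendsto (fun n => b n - a n) atTop (𝓝 0))
    (hsum : ∑' n, ENNReal.ofReal (ω (b n - a n)) ≠ ∞) :
    GaugeNull ω {x | ∃ᶠ n in atTop, x ∈ Ioo (a n) (b n)} := by
  intro ε hε η hη
  obtain ⟨N, hN⟩ := eventually_atTop.mp ((hlen.eventually (ge_mem_nhds hε)).and
    ((ENNReal.tendsto_sum_nat_add _ hsum).eventually (ge_mem_nhds hη)))
  refine ⟨fun n => a (n + N), fun n => b (n + N), fun x hx => ?_,
    fun n => ⟨hab _, (hN (n + N) (Nat.le_add_left N n)).1⟩, (hN N le_rfl).2⟩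
  obtain ⟨n, hn, hxn⟩ := frequently_atTop.mp hx N
  exact mem_iUnion.mpr ⟨n - N, by simpa only [Nat.sub_add_cancel hn] using hxn⟩

theorem gaugeNull_setOf_frequently_cofinite_mem_Ioo {ι : Type*} [Countable ι] [Infinite ι]
    {a b : ι → ℝ} (hab : ∀ i, a i ≤ b i) (hlen : Tendsto (fun i => b i - a i) cofinite (𝓝 0))
    (hsum : ∑' i, ENNReal.ofReal (ω (b i - a i)) ≠ ∞) :
    GaugeNull ω {x | ∃ᶠ i in cofinite, x ∈ Ioo (a i) (b i)} := by
  obtain ⟨_⟩ := nonempty_denumerable ι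
  let e : ℕ ≃ ι := (Denumerable.eqv ι).symm
  have he : Tendsto e atTop cofinite := Nat.cofinite_eq_atTop ▸ e.injective.tendsto_cofinite
  refine (gaugeNull_setOf_frequently_atTop_mem_Ioo (a := a ∘ e) (b := b ∘ e) (fun n => hab _)
    (hlen.comp he) (by rwa [← e.tsum_eq] at hsum)).mono fun x hx => ?_
  exact Nat.frequently_atTop_iff_infinite.mpr
    ((frequently_cofinite_iff_infinite.mp hx).preimage (by simp [e.range_eq_univ]))

theorem exists_fin_three_abs_sub_lt {x t r : ℝ} (hx : x ∈ Icc (0 : ℝ) 1) (hr : r ≤ 1)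
    (h : distZ (x - t) < r) : ∃ j : Fin 3, |x - (Int.fract t + (j : ℕ) - 1)| < r := by
  obtain ⟨m, hm⟩ : ∃ m : ℤ, |x - Int.fract t - m| < r :=
    ⟨round (x - t) + ⌊t⌋, by rw [distZ] at h; rw [Int.fract]; push_cast; convert h using 2; ring⟩
  obtain ⟨h₁, h₂⟩ := abs_lt.mp hm
  have hm₁ : (-2 : ℤ) < m := by
    have : (-2 : ℝ) < m := by linarith [hx.1, Int.fract_lt_one t]
    exact_mod_cast this
  have hm₂ : m < 2 := by
    have : (m : ℝ) < 2 := by linarith [hx.2, Int.fract_nonneg t]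
    exact_mod_cast this
  interval_cases m
  · exact ⟨0, by convert hm using 2; push_cast [Fin.val_zero]; ring⟩
  · exact ⟨1, by convert hm using 2; push_cast [Fin.val_one]; ring⟩
  · exact ⟨2, by convert hm using 2; push_cast [Fin.val_two]; ring⟩

theorem tendsto_fst_cofinite_of_finite {α β : Type*} [Finite β] :
    Tendsto (Prod.fst : α × β → α) cofinite cofinite :=
  Tendsto.cofinite_of_finite_preimage_singleton fun k =>
    (finite_univ.image fun j : β => (k, j)).subset (by rintro ⟨k', j⟩ rfl; exact ⟨j, trivial, rfl⟩)

theorem gaugeNull_setOf_frequently_distZ_lt (α : ℝ) {r : ℤ → ℝ} (hr₀ : ∀ k, 0 ≤ r k)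
    (hr₁ : ∀ k, r k ≤ 1) (hr : Tendsto r cofinite (𝓝 0))
    (hsum : ∑' k, ENNReal.ofReal (ω (2 * r k)) ≠ ∞) :
    GaugeNull ω {x ∈ Icc (0 : ℝ) 1 | ∃ᶠ k : ℤ in cofinite, distZ (x - k * α) < r k} := by
  let z (p : ℤ × Fin 3) : ℝ := Int.fract (p.1 * α) + (p.2 : ℕ) - 1
  have hlen (p : ℤ × Fin 3) : z p + r p.1 - (z p - r p.1) = 2 * r p.1 := by ring
  refine (gaugeNull_setOf_frequently_cofinite_mem_Ioo (a := fun p => z p - r p.1)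
    (b := fun p => z p + r p.1) (fun p => by linarith [hr₀ p.1]) ?_ ?_).mono ?_
  · simpa [hlen] using (hr.comp tendsto_fst_cofinite_of_finite).const_mul 2
  · rw [tsum_congr fun p => by rw [hlen], ENNReal.tsum_prod (f := fun k (_ : Fin 3) =>
      ENNReal.ofReal (ω (2 * r k)))]
    simpa [ENNReal.tsum_mul_left] using ENNReal.mul_ne_top (by simp) hsum
  · rintro x ⟨hx, hfreq⟩
    refine frequently_cofinite_iff_infinite.mpr
      (((frequently_cofinite_iff_infinite.mp hfreq).mono fun k hk => ?_).of_image Prod.fst)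
    obtain ⟨j, hj⟩ := exists_fin_three_abs_sub_lt hx (hr₁ k) hk
    exact ⟨(k, j), abs_sub_lt_iff.mp hj |>.elim fun h₁ h₂ => ⟨by linarith, by linarith⟩, rfl⟩

end Covers

theorem omegaS_exp_neg (s t : ℝ) : omegaS s (Real.exp (-t)) = t ^ (-s) := by
  rw [omegaS, if_pos (Real.exp_pos _), Real.log_exp, neg_neg]

theorem tendsto_omegaS_nhdsGT_zero {s : ℝ} (hs : 0 < s) : Tendsto (omegaS s) (𝓝[>] 0) (𝓝 0) :=
  ((tendsto_rpow_neg_atTop hs).comp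
    (tendsto_neg_atBot_atTop.comp Real.tendsto_log_nhdsGT_zero)).congr'
      (eventually_nhdsWithin_of_forall fun _ hr => (if_pos hr).symm)

theorem tsum_ofReal_omegaS_exp_ne_top {s c : ℝ} (hs : 1 < s) (hc : 0 ≤ c) :
    ∑' k : ℤ, ENNReal.ofReal (omegaS s (Real.exp (-(c * |(k : ℝ)|)))) ≠ ∞ := by
  simp_rw [omegaS_exp_neg, Real.mul_rpow hc (abs_nonneg _)]
  rw [← ENNReal.ofReal_tsum_of_nonneg (fun k => by positivity)
    ((Real.summable_abs_int_rpow hs).mul_left _)]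
  exact ENNReal.ofReal_ne_top

theorem tendsto_mul_abs_intCast_cofinite_atTop {c : ℝ} (hc : 0 < c) :
    Tendsto (fun k : ℤ => c * |(k : ℝ)|) cofinite atTop :=
  (tendsto_norm_cocompact_atTop.comp Int.tendsto_coe_cofinite).const_mul_atTop hc

theorem eventually_exp_neg_two_mul_le {c : ℝ} (hc : 0 < c) :
    ∀ᶠ k : ℤ in cofinite, Real.exp (-(2 * c * |(k : ℝ)|)) ≤ Real.exp (-(c * |(k : ℝ)|)) / 2 := by
  filter_upwards [(tendsto_mul_abs_intCast_cofinite_atTop hc).eventually_ge_atTop 1] with k hk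
  have htwo : 2 ≤ Real.exp (c * |(k : ℝ)|) := by linarith [Real.add_one_le_exp (c * |(k : ℝ)|)]
  rw [show -(2 * c * |(k : ℝ)|) = -(c * |(k : ℝ)|) - c * |(k : ℝ)| by ring, Real.exp_sub,
    div_le_div_iff_of_pos_left (Real.exp_pos _) (by positivity) two_pos]
  exact htwo

theorem frequently_distZ_lt_exp_of_lt_resStrength {α x c : ℝ}
    (hx : ¬ ∃ k m : ℤ, x = k * α + m) (hc : ENNReal.ofReal c < resStrength α x) :
    ∃ᶠ k : ℤ in cofinite, distZ (x - k * α) < Real.exp (-(c * |(k : ℝ)|)) := by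
  rw [resStrength, if_neg hx] at hc
  refine ((frequently_lt_of_lt_limsup (by isBoundedDefault) hc).and_eventually
    (eventually_cofinite_ne 0)).mono ?_
  rintro k ⟨hk, hk₀⟩
  have hk : c * |(k : ℝ)| < -Real.log (distZ (x - k * α)) :=
    (lt_div_iff₀ (by positivity)).mp (ENNReal.ofReal_lt_ofReal_iff'.mp hk).1
  have hd : 0 ≤ distZ (x - k * α) := abs_nonneg _
  rcases hd.eq_or_lt with h₀ | hpos
  · rw [← h₀]
    exact Real.exp_pos _
  · exact (Real.log_lt_iff_lt_exp hpos).mp (by linarith)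

theorem resSet_subset_range_union {α c : ℝ} {δ : ℝ≥0∞} (hc : 0 < c)
    (hcδ : ENNReal.ofReal (2 * c) < δ) :
    resSet α δ ⊆ range (fun p : ℤ × ℤ => p.1 * α + p.2) ∪ {x ∈ Icc (0 : ℝ) 1 |
      ∃ᶠ k : ℤ in cofinite, distZ (x - k * α) < Real.exp (-(c * |(k : ℝ)|)) / 2} := by
  rintro x ⟨hx01, hxδ⟩
  by_cases hx : ∃ k m : ℤ, x = k * α + m
  · obtain ⟨k, m, rfl⟩ := hx
    exact Or.inl ⟨(k, m), rfl⟩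
  · refine Or.inr ⟨hx01, ?_⟩
    refine ((frequently_distZ_lt_exp_of_lt_resStrength hx (hxδ ▸ hcδ)).and_eventually
      (eventually_exp_neg_two_mul_le hc)).mono fun k hk => ?_
    simpa only [mul_assoc] using hk.1.trans_le hk.2

theorem hausdorff_omegaS_resSet_eq_zero_general (α : ℝ) (δ : ℝ≥0∞) (hδ : 0 < δ)
    (s : ℝ) (hs : 1 < s) :
    gaugeHaus (omegaS s) (resSet α δ) = 0 := by
  obtain ⟨c, hc₀, hcδ⟩ : ∃ c : ℝ, 0 < c ∧ ENNReal.ofReal (2 * c) < δ := by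
    obtain ⟨c, -, h₀, hcδ⟩ := ENNReal.lt_iff_exists_real_btwn.mp hδ
    exact ⟨c / 2, by simpa using h₀, by rwa [mul_div_cancel₀ _ two_ne_zero]⟩
  have hexceptional := gaugeNull_of_countable (tendsto_omegaS_nhdsGT_zero (s := s) (by linarith))
    (countable_range fun p : ℤ × ℤ => p.1 * α + p.2)
  have hresonant := gaugeNull_setOf_frequently_distZ_lt (ω := omegaS s) α
    (r := fun k => Real.exp (-(c * |(k : ℝ)|)) / 2) (fun k => by positivity)
    (fun k => (half_le_self (Real.exp_pos _).le).trans
      (Real.exp_le_one_iff.mpr (neg_nonpos.mpr (by positivity))))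
    (by simpa using (Real.tendsto_exp_neg_atTop_nhds_zero.comp
      (tendsto_mul_abs_intCast_cofinite_atTop hc₀)).div_const 2)
    (by simpa [mul_div_cancel₀] using tsum_ofReal_omegaS_exp_ne_top hs hc₀.le)
  exact ((hexceptional.union hresonant).mono
    (resSet_subset_range_union hc₀ hcδ)).gaugeHaus_eq_zero

/-- For irrational `α ∈ [0,1]` and `0 < δ ≤ ∞`, the `ω_s`-Hausdorff measure of `D(δ)`
vanishes for every `s > 1`. -/
theorem hausdorff_omegaS_resSet_eq_zero (α : ℝ) (hα : Irrational α)
    (hα01 : α ∈ Set.Icc (0 : ℝ) 1) (δ : ℝ≥0∞) (hδ : 0 < δ)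
    (s : ℝ) (hs : 1 < s) :
    gaugeHaus (omegaS s) (resSet α δ) = 0 :=
  hausdorff_omegaS_resSet_eq_zero_general α δ hδ s hs
end

section
/- Let α ∈ [0,1] be irrational and let 0 < η < ∞. Define B(η) = {x ∈ [0,1] : ‖x − kα‖_{ℝ/ℤ} < e^{−|k|η} for infinitely many k ∈ ℤ}. Then for every s > 1, the ω_s-Hausdorff measure of B(η) vanishes: ℋ^{ω_s}(B(η)) = 0. -/
open Filter MeasureTheory Set
open scoped ENNReal NNReal Classical Topology

/-!
Every `x ∈ B(η)` lies, for infinitely many `k`, in one of the three intervals of radius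
`e^{-|k|η}` centred at `{kα} - 1`, `{kα}`, `{kα} + 1`. Since
`ω_s(2e^{-|k|η}) = (|k|η - log 2)^{-s}` is of order `|k|^{-s}`, these gauges have a convergent
sum for `s > 1`, so by the Hausdorff–Cantelli argument the tails of this family of intervals are
covers of `B(η)` of arbitrarily small `ω_s`-cost.
-/

theorem gaugeHaus_eq_zero_of_frequently_mem_ball (ω : ℝ → ℝ) {S : Set ℝ} {c r : ℕ → ℝ}
    (hr0 : ∀ i, 0 ≤ r i) (hr : Tendsto r atTop (𝓝 0))
    (hsum : ∑' i, ENNReal.ofReal (ω (2 * r i)) ≠ ∞)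
    (hS : ∀ x ∈ S, ∃ᶠ i in atTop, x ∈ Metric.ball (c i) (r i)) : gaugeHaus ω S = 0 := by
  refine le_antisymm (iSup₂_le fun ε hε => ?_) bot_le
  obtain ⟨N₀, hN₀⟩ := eventually_atTop.1 (hr.eventually (ge_mem_nhds (half_pos hε)))
  refine ge_of_tendsto (ENNReal.tendsto_sum_nat_add _ hsum) ?_
  filter_upwards [eventually_ge_atTop N₀] with N hN
  have hcover : S ⊆ ⋃ i, Ioo (c (i + N) - r (i + N)) (c (i + N) + r (i + N)) := by
    intro x hx
    obtain ⟨i, hiN, hi⟩ := (hS x hx).forall_exists_of_atTop N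
    refine mem_iUnion.2 ⟨i - N, ?_⟩
    rwa [Nat.sub_add_cancel hiN, ← Real.ball_eq_Ioo]
  have hlen : ∀ i, c (i + N) - r (i + N) ≤ c (i + N) + r (i + N) ∧
      c (i + N) + r (i + N) - (c (i + N) - r (i + N)) ≤ ε := fun i => by
    have := hN₀ (i + N) (by omega)
    constructor <;> linarith [hr0 (i + N)]
  refine iInf_le_of_le _ <| iInf_le_of_le _ <| iInf_le_of_le hcover <| iInf_le_of_le hlen ?_
  simp only [add_sub_sub_cancel, ← two_mul]; rfl

theorem gaugeHaus_eq_zero_of_infinite_mem_ball {ι : Type*} [Countable ι] [Infinite ι]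
    (ω : ℝ → ℝ) {S : Set ℝ} {c r : ι → ℝ}
    (hr0 : ∀ i, 0 ≤ r i) (hr : Tendsto r cofinite (𝓝 0))
    (hsum : ∑' i, ENNReal.ofReal (ω (2 * r i)) ≠ ∞)
    (hS : ∀ x ∈ S, {i | x ∈ Metric.ball (c i) (r i)}.Infinite) : gaugeHaus ω S = 0 := by
  obtain ⟨e⟩ := nonempty_equiv_of_countable (α := ℕ) (β := ι)
  refine gaugeHaus_eq_zero_of_frequently_mem_ball ω (c := c ∘ e) (fun i => hr0 (e i)) ?_ ?_ ?_
  · rw [← Nat.cofinite_eq_atTop]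
    exact hr.comp e.injective.tendsto_cofinite
  · rwa [e.tsum_eq fun i => ENNReal.ofReal (ω (2 * r i))]
  · intro x hx
    rw [← Nat.cofinite_eq_atTop, frequently_cofinite_iff_infinite]
    exact (hS x hx).preimage (by simp [e.surjective.range_eq])

theorem exists_mem_ball_fract_add_of_distZ_lt {x y r : ℝ} (hx : x ∈ Icc (0 : ℝ) 1) (hr : r ≤ 1)
    (h : distZ (x - y) < r) : ∃ j : Fin 3, x ∈ Metric.ball (Int.fract y + j - 1) r := by
  set d : ℤ := round (x - y) + ⌊y⌋
  have hd : |x - (Int.fract y + d)| < r := by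
    rwa [show x - (Int.fract y + d) = x - y - round (x - y) by
      simp only [d, Int.fract, Int.cast_add]; ring]
  obtain ⟨hd₁, hd₂⟩ := abs_lt.1 hd
  have hd_gt : -2 < d := by
    have : (-2 : ℝ) < d := by linarith [Int.fract_lt_one y, hx.1]
    exact_mod_cast this
  have hd_lt : d < 2 := by
    have : (d : ℝ) < 2 := by linarith [Int.fract_nonneg y, hx.2]
    exact_mod_cast this
  refine ⟨⟨(d + 1).toNat, by omega⟩, ?_⟩
  have hcast : (((d + 1).toNat : ℕ) : ℝ) = d + 1 := by exact_mod_cast Int.toNat_of_nonneg (by omega)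
  rwa [Metric.mem_ball, Real.dist_eq, Fin.val_mk, hcast, add_sub_assoc, add_sub_cancel_right]

theorem omegaS_nonneg (s : ℝ) {r : ℝ} (hr : r ≤ 1) : 0 ≤ omegaS s r := by
  unfold omegaS
  split_ifs with hr0
  · exact Real.rpow_nonneg (neg_nonneg.2 (Real.log_nonpos hr0.le hr)) _
  · exact le_rfl

theorem omegaS_le_rpow {s r t : ℝ} (hs : 0 ≤ s) (hr : 0 < r) (ht : 0 < t)
    (h : t ≤ -Real.log r) : omegaS s r ≤ t ^ (-s) := by
  rw [omegaS, if_pos hr]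
  exact Real.rpow_le_rpow_of_nonpos ht h (neg_nonpos.2 hs)

theorem tendsto_abs_intCast_mul_atTop {η : ℝ} (hη : 0 < η) :
    Tendsto (fun k : ℤ => |(k : ℝ)| * η) cofinite atTop :=
  (tendsto_norm_comp_cofinite_atTop_of_isClosedEmbedding
    Int.isClosedEmbedding_coe_real).atTop_mul_const hη

theorem summable_omegaS_two_mul_exp {s η : ℝ} (hs : 1 < s) (hη : 0 < η) :
    Summable fun k : ℤ => omegaS s (2 * Real.exp (-(|(k : ℝ)| * η))) := by
  refine .of_norm_bounded_eventually
    ((Real.summable_abs_int_rpow hs).mul_left ((η / 2) ^ (-s))) ?_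
  filter_upwards [(tendsto_abs_intCast_mul_atTop hη).eventually_ge_atTop (2 * Real.log 2)]
    with k hk
  have hlog : -Real.log (2 * Real.exp (-(|(k : ℝ)| * η))) = |(k : ℝ)| * η - Real.log 2 := by
    rw [Real.log_mul two_ne_zero (Real.exp_pos _).ne', Real.log_exp]
    ring
  have hlog2 := Real.log_pos one_lt_two
  rw [Real.norm_of_nonneg (omegaS_nonneg s ?_), ← Real.mul_rpow (by positivity) (abs_nonneg _)]
  · exact omegaS_le_rpow (by linarith) (by positivity) (by nlinarith) (by rw [hlog]; linarith)
  · exact (Real.log_nonpos_iff (by positivity)).1 (by linarith)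

theorem hausdorff_omegaS_limsupSet_eq_zero_general (α : ℝ) (η : ℝ) (hη : 0 < η)
    (s : ℝ) (hs : 1 < s) :
    gaugeHaus (omegaS s)
      {x ∈ Set.Icc (0 : ℝ) 1 |
        {k : ℤ | distZ (x - (k : ℝ) * α) < Real.exp (-(|(k : ℝ)| * η))}.Infinite} = 0 := by
  have hr_le_one (k : ℤ) : Real.exp (-(|(k : ℝ)| * η)) ≤ 1 :=
    Real.exp_le_one_iff.2 (neg_nonpos.2 (by positivity))
  have hfst : Tendsto (Prod.fst : ℤ × Fin 3 → ℤ) cofinite cofinite :=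
    Tendsto.cofinite_of_finite_preimage_singleton fun k =>
      ((finite_singleton k).prod finite_univ).subset fun _ hp => ⟨hp, trivial⟩
  refine gaugeHaus_eq_zero_of_infinite_mem_ball (omegaS s)
    (c := fun p : ℤ × Fin 3 => Int.fract (p.1 * α) + p.2 - 1)
    (r := fun p => Real.exp (-(|(p.1 : ℝ)| * η))) (fun _ => (Real.exp_pos _).le) ?_ ?_ ?_
  · exact (Real.tendsto_exp_neg_atTop_nhds_zero.comp (tendsto_abs_intCast_mul_atTop hη)).comp hfst
  · simp only [ENNReal.tsum_prod', tsum_fintype, Finset.sum_const, Finset.card_univ, nsmul_eq_mul,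
      ENNReal.tsum_mul_left]
    exact ENNReal.mul_ne_top (ENNReal.natCast_ne_top _)
      (summable_omegaS_two_mul_exp hs hη).tsum_ofReal_ne_top
  · rintro x ⟨hx, hinf⟩
    refine Infinite.of_image Prod.fst (hinf.mono fun k hk => ?_)
    obtain ⟨j, hj⟩ := exists_mem_ball_fract_add_of_distZ_lt hx (hr_le_one k) hk
    exact ⟨(k, j), hj, rfl⟩

/-- For irrational `α ∈ [0,1]` and `0 < η < ∞`, the set
`B(η) = {x ∈ [0,1] : ‖x - kα‖_{ℝ/ℤ} < e^{-|k|η} for infinitely many k ∈ ℤ}`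
has vanishing `ω_s`-Hausdorff measure for every `s > 1`. -/
theorem hausdorff_omegaS_limsupSet_eq_zero (α : ℝ) (hα : Irrational α)
    (hα01 : α ∈ Set.Icc (0 : ℝ) 1) (η : ℝ) (hη : 0 < η)
    (s : ℝ) (hs : 1 < s) :
    gaugeHaus (omegaS s)
      {x ∈ Set.Icc (0 : ℝ) 1 |
        {k : ℤ | distZ (x - (k : ℝ) * α) < Real.exp (-(|(k : ℝ)| * η))}.Infinite} = 0 :=
  hausdorff_omegaS_limsupSet_eq_zero_general α η hη s hs
end

section
/- Let α be irrational with continued fraction convergent denominators (q_n), let δ > 0, and let I be an interval in ℝ/ℤ with Lebesgue measure |I| > 0. Then for all sufficiently large integers k there exists a finite set 𝒟 of natural numbers with 𝒟 ⊆ {n : q_k/2 ≤ n < q_k and nα mod 1 ∈ I} such that: (i) (1/8)·|I|·q_k ≤ #𝒟 ≤ |I|·q_k; and (ii) for every n ∈ 𝒟, the closed ball B(nα, e^{−nδ}) in ℝ/ℤ is contained in I. -/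
open Filter MeasureTheory Set
open scoped ENNReal NNReal Classical

theorem Real.fact_zero_lt_one : Fact ((0 : ℝ) < 1) := ⟨zero_lt_one⟩

attribute [local instance] Real.fact_zero_lt_one

/-- `qden α n` is the denominator `q_n` of the `n`-th convergent of the continued
fraction expansion of `α`. -/
noncomputable def qden (α : ℝ) (n : ℕ) : ℝ := (GenContFract.of α).dens n

/-!
Fix a rational `p / q` with `|α - p / q| ≤ 1 / q²` and `q ≫ 1 / |I|`. For `m < q` the point
`A + m α` lies within `1 / q` of `A + (m p mod q) / q`, and `m ↦ m p mod q` permutes `ℤ / q`, so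
every block of `q` consecutive multiples of `α` puts at least `|J| q - 3` points into an arc
`J ⊂ I` shrunk by `|I| / 16` at both ends. The window `[q_k / 2, q_k)` contains about
`q_k / (2 q)` such blocks, hence at least `|I| q_k / 8` good `n`, and once `q_k` is large the
radius `e^{-n δ}` is below the margin between `J` and `I`.
-/

open Metric

local notation "𝕋" => AddCircle (1 : ℝ)

namespace AddCircle

theorem closedBall_subset_coe_image_Ioo {p a b r : ℝ} {x : AddCircle p}
    (hx : x ∈ ((↑) : ℝ → AddCircle p) '' Ioo (a + r) (b - r)) :
    closedBall x r ⊆ ((↑) : ℝ → AddCircle p) '' Ioo a b := by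
  obtain ⟨x, ⟨hax, hxb⟩, rfl⟩ := hx
  rintro y hy
  obtain ⟨y, rfl⟩ := QuotientAddGroup.mk_surjective y
  have hy' : y ∈ QuotientAddGroup.mk ⁻¹' closedBall (x : AddCircle p) r := hy
  rw [coe_real_preimage_closedBall_eq_iUnion, mem_iUnion] at hy'
  obtain ⟨z, hz⟩ := hy'
  rw [Real.closedBall_eq_Icc] at hz
  refine ⟨y - z • p, ⟨by linarith [hz.1], by linarith [hz.2]⟩, ?_⟩
  simp [coe_period]

theorem volume_coe_image_Ioo {p : ℝ} [Fact (0 < p)] {a b : ℝ} (hb : b ≤ a + p) :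
    volume (((↑) : ℝ → AddCircle p) '' Ioo a b) = ENNReal.ofReal (b - a) := by
  have hsub : Ioo a b ⊆ Ioc a (a + p) := Ioo_subset_Ioc_self.trans (Ioc_subset_Ioc_right hb)
  have hmeas : MeasurableSet (((↑) : ℝ → AddCircle p) '' Ioo a b) :=
    (QuotientAddGroup.isOpenMap_coe _ isOpen_Ioo).measurableSet
  rw [add_projection_respects_measure p a hmeas, ← Real.volume_Ioo]
  congr 1
  refine Subset.antisymm (fun x ⟨⟨y, hy, hyx⟩, hx⟩ => ?_) fun x hx => ⟨⟨x, hx, rfl⟩, hsub hx⟩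
  -- `equivIoc p a` inverts the projection on `Ioc a (a + p)`
  have := (equivIoc_coe_eq hx).symm.trans ((congrArg (equivIoc p a) hyx).symm.trans
    (equivIoc_coe_eq (hsub hy)))
  rwa [show x = y from congrArg Subtype.val this]

theorem coe_add_nat_mul_eq_of_modEq {q : ℕ} (hq : q ≠ 0) {p N : ℤ} {m : ℕ}
    (h : (m : ℤ) * p ≡ N [ZMOD q]) (A x : ℝ) :
    ((A + m * x : ℝ) : 𝕋) = ((A + N / q + m * (x - p / q) : ℝ) : 𝕋) := by
  obtain ⟨k, hk⟩ := Int.modEq_iff_dvd.1 h.symm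
  have hk' : (m : ℝ) * p - N = q * k := by exact_mod_cast hk
  have : A + m * x = A + N / q + m * (x - p / q) + k := by
    field_simp
    linear_combination hk'
  rw [this, coe_add]
  simp

end AddCircle

theorem Int.exists_nat_lt_mul_modEq_of_isCoprime {q : ℕ} (hq : 0 < q) {p : ℤ}
    (h : IsCoprime p q) (N : ℤ) : ∃ m : ℕ, m < q ∧ (m : ℤ) * p ≡ N [ZMOD q] := by
  obtain ⟨u, v, huv⟩ := h
  have hq' : (0 : ℤ) < q := by exact_mod_cast hq
  refine ⟨((u * N) % q).toNat, by have := Int.emod_lt_of_pos (u * N) hq'; omega, ?_⟩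
  rw [Int.toNat_of_nonneg (Int.emod_nonneg (u * N) hq'.ne'), Int.modEq_iff_dvd]
  exact ⟨N * v + u * N / q * p,
    by linear_combination (-N) * huv - p * Int.emod_add_mul_ediv (u * N) q⟩

theorem Irrational.exists_rat_abs_sub_lt_and_le_den {ξ : ℝ} (hξ : Irrational ξ) (N : ℕ) :
    ∃ r : ℚ, |ξ - r| < 1 / (r.den : ℝ) ^ 2 ∧ N ≤ r.den := by
  by_contra! h
  apply Real.infinite_rat_abs_sub_lt_one_div_den_sq_of_irrational hξ
  -- otherwise all these approximations would be fractions `z / d` with `|z| ≤ M` and `d < N`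
  set M : ℤ := ⌈(|ξ| + 1) * N⌉
  refine (((finite_Icc (-M) M).prod (finite_Iio N)).image
    (fun z : ℤ × ℕ => (z.1 : ℚ) / z.2)).subset fun r (hr : |ξ - r| < _) => ?_
  have hden := h r hr
  have hr1 : |(r : ℝ)| < |ξ| + 1 := by
    have : 1 / (r.den : ℝ) ^ 2 ≤ 1 :=
      div_le_one_of_le₀ (one_le_pow₀ (by exact_mod_cast r.pos)) (by positivity)
    have := abs_sub_abs_le_abs_sub (r : ℝ) ξ
    rw [abs_sub_comm] at this
    linarith
  have hnum : |(r.num : ℝ)| ≤ (|ξ| + 1) * N := by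
    rw [← Rat.cast_intCast, ← Rat.mul_den_eq_num, Rat.cast_mul, abs_mul, Rat.cast_natCast,
      Nat.abs_cast]
    gcongr
  refine ⟨(r.num, r.den), ⟨?_, hden⟩, Rat.num_div_den r⟩
  have := hnum.trans (Int.le_ceil _)
  rw [← Int.cast_abs] at this
  exact abs_le.1 (by exact_mod_cast this)

theorem tendsto_qden_atTop {α : ℝ} (hα : Irrational α) : Tendsto (qden α) atTop atTop := by
  have hnt : ∀ n, ¬(GenContFract.of α).TerminatedAt n := fun n h => by
    obtain ⟨r, hr⟩ := (GenContFract.terminates_iff_rat α).1 ⟨n, h⟩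
    exact hα ⟨r, hr.symm⟩
  refine tendsto_atTop_mono (fun n => ?_)
    (tendsto_atTop_add_const_right _ (-1) tendsto_natCast_atTop_atTop)
  have : (n : ℝ) ≤ Nat.fib (n + 1) + 1 := by
    exact_mod_cast (Nat.le_fib_add_one n).trans (Nat.add_le_add_right Nat.fib_le_fib_succ 1)
  have := GenContFract.succ_nth_fib_le_of_nth_den (v := α) (Or.inr (hnt (n - 1)))
  rw [qden]
  linarith

open Finset

theorem Int.sub_sub_one_le_card_Ioo_floor_ceil {K : Type*} [Field K] [LinearOrder K]
    [IsStrictOrderedRing K] [FloorRing K] (x y : K) : y - x - 1 ≤ #(Ioo ⌊x⌋ ⌈y⌉) := by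
  have h : ((⌈y⌉ - ⌊x⌋ - 1 : ℤ) : K) ≤ ((⌈y⌉ - ⌊x⌋ - 1).toNat : ℤ) :=
    Int.cast_le.2 (Int.self_le_toNat _)
  rw [Int.card_Ioo]
  push_cast at h
  linarith [Int.le_ceil y, Int.floor_le x]

theorem le_card_filter_range_coe_mem_image_Ioo {α : ℝ} {r : ℚ}
    (hr : |α - r| ≤ 1 / (r.den : ℝ) ^ 2) (A : ℝ) {u v : ℝ} (huv : v ≤ u + 1) :
    (v - u) * r.den - 3 ≤
      #{m ∈ range r.den | ((A + (m : ℕ) * α : ℝ) : 𝕋) ∈ ((↑) : ℝ → 𝕋) '' Ioo u v} := by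
  set q := r.den
  have hq : (0 : ℝ) < q := by exact_mod_cast r.pos
  -- the integers `N` with `u + 1/q < A + N/q < v - 1/q`
  set S : Finset ℤ := Ioo ⌊(u - A) * q + 1⌋ ⌈(v - A) * q - 1⌉
  have hS : ∀ N ∈ S, (u - A) * q + 1 < N ∧ (N : ℝ) < (v - A) * q - 1 := fun N hN => by
    rwa [Finset.mem_Ioo, Int.floor_lt, Int.lt_ceil] at hN
  have hcard : (v - u) * q - 3 ≤ #S := by
    linarith [Int.sub_sub_one_le_card_Ioo_floor_ceil ((u - A) * q + 1) ((v - A) * q - 1)]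
  -- `N ↦ m` with `m p ≡ N (mod q)` injects `S` into the `m < q` that land in `(u, v)`
  choose f hf_lt hf_mod using Int.exists_nat_lt_mul_modEq_of_isCoprime r.pos r.isCoprime_num_den
  refine hcard.trans (Nat.cast_le.2 (card_le_card_of_injOn f (fun N hN => ?_) ?_))
  · obtain ⟨hN₁, hN₂⟩ := hS N hN
    set e := (f N : ℝ) * (α - r)
    have he : |e * q| < 1 := by
      have : (f N : ℝ) < q := by exact_mod_cast hf_lt N
      rw [abs_mul, abs_mul, Nat.abs_cast, abs_of_pos hq]
      calc (f N : ℝ) * |α - r| * q ≤ f N * (1 / q ^ 2) * q := by gcongr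
        _ < q * (1 / q ^ 2) * q := by gcongr
        _ = 1 := by field_simp
    have hX : (A + N / q + e) * q = A * q + N + e * q := by field_simp
    obtain ⟨he₁, he₂⟩ := abs_lt.1 he
    refine mem_filter.2 ⟨mem_range.2 (hf_lt N), A + N / q + e, ⟨?_, ?_⟩, ?_⟩
    · exact lt_of_mul_lt_mul_right (by linarith) hq.le
    · exact lt_of_mul_lt_mul_right (by linarith) hq.le
    · rw [AddCircle.coe_add_nat_mul_eq_of_modEq r.den_ne_zero (hf_mod N) A α, ← Rat.cast_def]
  · intro N hN N' hN' hfN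
    have hdvd : (q : ℤ) ∣ N' - N :=
      Int.modEq_iff_dvd.1 ((hf_mod N).symm.trans (hfN ▸ hf_mod N'))
    have hlt : |N' - N| < q := by
      obtain ⟨hN₁, hN₂⟩ := hS N hN
      obtain ⟨hN'₁, hN'₂⟩ := hS N' hN'
      have : |((N' - N : ℤ) : ℝ)| < q := by
        rw [abs_lt]; push_cast; constructor <;> nlinarith
      exact_mod_cast this
    linarith [Int.eq_zero_of_abs_lt_dvd hdvd hlt]

theorem le_card_filter_Ico_coe_mem_image_Ioo {α : ℝ} {r : ℚ}
    (hr : |α - r| ≤ 1 / (r.den : ℝ) ^ 2) {u v : ℝ} (huv : v ≤ u + 1) (T c : ℕ) :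
    c * ((v - u) * r.den - 3) ≤
      #{n ∈ Ico T (T + c * r.den) | (((n : ℕ) * α : ℝ) : 𝕋) ∈ ((↑) : ℝ → 𝕋) '' Ioo u v} := by
  induction c with
  | zero => simp
  | succ c ih =>
    set q := r.den
    have hsplit :
        #{n ∈ Ico T (T + (c + 1) * q) | (((n : ℕ) * α : ℝ) : 𝕋) ∈ ((↑) : ℝ → 𝕋) '' Ioo u v} =
          #{n ∈ Ico T (T + c * q) | (((n : ℕ) * α : ℝ) : 𝕋) ∈ ((↑) : ℝ → 𝕋) '' Ioo u v} +
          #{k ∈ range q | ((((T + c * q : ℕ) : ℝ) * α + (k : ℕ) * α : ℝ) : 𝕋) ∈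
            ((↑) : ℝ → 𝕋) '' Ioo u v} := by
      simp only [card_filter]
      rw [← sum_Ico_consecutive _ (Nat.le_add_right T (c * q)) (by gcongr; omega),
        sum_Ico_eq_sum_range _ (T + c * q), add_mul, one_mul, ← add_assoc,
        Nat.add_sub_cancel_left]
      push_cast
      simp only [add_mul]
    rw [hsplit, Nat.cast_add, Nat.cast_add, Nat.cast_one]
    linarith [le_card_filter_range_coe_mem_image_Ioo hr (((T + c * q : ℕ) : ℝ) * α) huv]

theorem le_card_filter_Ico_half_coe_mem_image_Ioo {α : ℝ} {r : ℚ}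
    (hr : |α - r| ≤ 1 / (r.den : ℝ) ^ 2) {u v : ℝ} (huv : v ≤ u + 1)
    (hq : 21 ≤ (v - u) * r.den) {Q : ℝ} (hQ : 3 * (1 + r.den) ≤ Q) :
    (v - u) * Q / 7 ≤
      #{n ∈ Ico ⌈Q / 2⌉₊ ⌈Q⌉₊ | (((n : ℕ) * α : ℝ) : 𝕋) ∈ ((↑) : ℝ → 𝕋) '' Ioo u v} := by
  set q := r.den
  have hq0 : (0 : ℝ) < q := by exact_mod_cast r.pos
  set c := ⌊(Q / 2 - 1) / q⌋₊
  have hT : (⌈Q / 2⌉₊ : ℝ) < Q / 2 + 1 := Nat.ceil_lt_add_one (by linarith)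
  have hc₁ : (c : ℝ) * q ≤ Q / 2 - 1 :=
    (le_div_iff₀ hq0).1 (Nat.floor_le (div_nonneg (by linarith) hq0.le))
  have hc₂ : Q / 2 - 1 - q < c * q := by
    have := (div_lt_iff₀ hq0).1 (Nat.lt_floor_add_one ((Q / 2 - 1) / q))
    linarith
  have hsub : Finset.Ico ⌈Q / 2⌉₊ (⌈Q / 2⌉₊ + c * q) ⊆ Finset.Ico ⌈Q / 2⌉₊ ⌈Q⌉₊ := by
    refine Finset.Ico_subset_Ico_right ?_
    have : ((⌈Q / 2⌉₊ + c * q : ℕ) : ℝ) ≤ ⌈Q⌉₊ := by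
      push_cast
      linarith [Nat.le_ceil Q]
    exact_mod_cast this
  have hvu : 0 < v - u := by nlinarith
  calc (v - u) * Q / 7 ≤ (6 / 7) * (v - u) * (Q / 2 - 1 - q) := by nlinarith
    _ ≤ (6 / 7) * (v - u) * (c * q) := by gcongr
    _ ≤ c * ((v - u) * q - 3) := by nlinarith [c.cast_nonneg (α := ℝ)]
    _ ≤ _ := le_card_filter_Ico_coe_mem_image_Ioo hr huv _ c
    _ ≤ _ := by exact_mod_cast Finset.card_le_card (filter_subset_filter _ hsub)

theorem exists_resonant_finset {α : ℝ} {r : ℚ} (hr : |α - r| ≤ 1 / (r.den : ℝ) ^ 2)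
    {a b : ℝ} (hb : b ≤ a + 1) (hq : 24 ≤ (b - a) * r.den) {Q δ : ℝ} (hδ : 0 ≤ δ)
    (hQ : 3 * (1 + r.den) ≤ Q) (hexp : Real.exp (-(Q / 2 * δ)) ≤ (b - a) / 16) :
    ∃ 𝒟 : Finset ℕ,
      (∀ n ∈ 𝒟, Q / 2 ≤ (n : ℝ) ∧ (n : ℝ) < Q ∧
        (((n : ℝ) * α : ℝ) : 𝕋) ∈ ((↑) : ℝ → 𝕋) '' Ioo a b) ∧
      (b - a) * Q / 8 ≤ #𝒟 ∧ (#𝒟 : ℝ) ≤ (b - a) * Q ∧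
      ∀ n ∈ 𝒟, closedBall (((n : ℝ) * α : ℝ) : 𝕋) (Real.exp (-((n : ℝ) * δ))) ⊆
        ((↑) : ℝ → 𝕋) '' Ioo a b := by
  set η := (b - a) / 16 with hη
  have hq0 : (0 : ℝ) < r.den := by exact_mod_cast r.pos
  have hab : 0 < b - a := by nlinarith
  have hcount := le_card_filter_Ico_half_coe_mem_image_Ioo hr (u := a + η) (v := b - η)
    (by linarith) (by rw [hη]; nlinarith) hQ
  obtain ⟨𝒟, h𝒟F, h𝒟card⟩ := Finset.exists_subset_card_eq (n := ⌈(b - a) * Q / 8⌉₊)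
    (Nat.ceil_le.2 ((le_of_eq (by rw [hη]; ring)).trans hcount))
  have hmem : ∀ n ∈ 𝒟, Q / 2 ≤ (n : ℝ) ∧ (n : ℝ) < Q ∧
      (((n : ℝ) * α : ℝ) : 𝕋) ∈ ((↑) : ℝ → 𝕋) '' Ioo (a + η) (b - η) := by
    intro n hn
    obtain ⟨hn, hnα⟩ := mem_filter.1 (h𝒟F hn)
    obtain ⟨hn₁, hn₂⟩ := Finset.mem_Ico.1 hn
    exact ⟨Nat.ceil_le.1 hn₁, Nat.lt_ceil.1 hn₂, hnα⟩
  refine ⟨𝒟, fun n hn => ?_, ?_, ?_, fun n hn => ?_⟩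
  · obtain ⟨hn₁, hn₂, hnα⟩ := hmem n hn
    exact ⟨hn₁, hn₂, image_mono (Set.Ioo_subset_Ioo (by linarith) (by linarith)) hnα⟩
  · rw [h𝒟card]
    exact Nat.le_ceil _
  · rw [h𝒟card]
    have := Nat.ceil_lt_add_one (show 0 ≤ (b - a) * Q / 8 by nlinarith)
    nlinarith
  · obtain ⟨hn₁, -, hnα⟩ := hmem n hn
    have hball : Real.exp (-((n : ℝ) * δ)) ≤ η :=
      (Real.exp_le_exp.2 (by nlinarith)).trans hexp
    exact AddCircle.closedBall_subset_coe_image_Ioo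
      (image_mono (Set.Ioo_subset_Ioo (by linarith) (by linarith)) hnα)

/-- Proposition 3.2 (interval version): for irrational `α`, `δ > 0` and an interval
`I ⊆ ℝ/ℤ` of positive length, for all large `k` there is a set `𝒟` of integers
`n ∈ [q_k/2, q_k)` with `nα ∈ I`, of cardinality between `(1/8)|I|q_k` and `|I|q_k`,
such that `B(nα, e^{-nδ}) ⊆ I` for every `n ∈ 𝒟`. -/
theorem exists_resonant_collection_interval (α : ℝ) (hα : Irrational α)
    (δ : ℝ) (hδ : 0 < δ) (a b : ℝ) (hab : a < b) (hb : b ≤ a + 1)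
    (I : Set (AddCircle (1 : ℝ)))
    (hI : I = (fun x : ℝ => (x : AddCircle (1 : ℝ))) '' Set.Ioo a b) :
    ∃ K : ℕ, ∀ k : ℕ, K ≤ k →
      ∃ 𝒟 : Finset ℕ,
        (∀ n ∈ 𝒟, qden α k / 2 ≤ (n : ℝ) ∧ (n : ℝ) < qden α k ∧
          (((n : ℝ) * α : ℝ) : AddCircle (1 : ℝ)) ∈ I) ∧
        (1 / 8) * (volume I).toReal * qden α k ≤ (𝒟.card : ℝ) ∧
        (𝒟.card : ℝ) ≤ (volume I).toReal * qden α k ∧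
        ∀ n ∈ 𝒟, Metric.closedBall (((n : ℝ) * α : ℝ) : AddCircle (1 : ℝ))
            (Real.exp (-((n : ℝ) * δ))) ⊆ I := by
  subst hI
  rw [AddCircle.volume_coe_image_Ioo hb, ENNReal.toReal_ofReal (by linarith)]
  obtain ⟨r, hr, hden⟩ := hα.exists_rat_abs_sub_lt_and_le_den ⌈24 / (b - a)⌉₊
  have hq : 24 ≤ (b - a) * r.den := (div_le_iff₀' (by linarith)).1 (Nat.ceil_le.1 hden)
  have hexp : Tendsto (fun k => Real.exp (-(qden α k / 2 * δ))) atTop (nhds 0) :=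
    Real.tendsto_exp_neg_atTop_nhds_zero.comp
      (((tendsto_qden_atTop hα).atTop_div_const two_pos).atTop_mul_const hδ)
  obtain ⟨K, hK⟩ := eventually_atTop.1
    (((tendsto_qden_atTop hα).eventually_ge_atTop (3 * (1 + r.den))).and
      (hexp.eventually (ge_mem_nhds (by linarith : (0 : ℝ) < (b - a) / 16))))
  refine ⟨K, fun k hk => ?_⟩
  obtain ⟨𝒟, hmem, hlow, hup, hball⟩ :=
    exists_resonant_finset hr.le hb hq hδ.le (hK k hk).1 (hK k hk).2
  exact ⟨𝒟, hmem, by linarith, hup, hball⟩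
end

section
/- Let α be irrational with continued fraction convergent denominators (q_n). Let δ > 0, let a be a real number with 0 < a < min{2^{−10}, 2^{−10}·δ}, let j ≥ 1 be an integer with 1/2 ≤ j·2⁹·a·δ^{−1} ≤ 1, let v > 0, and let k ≥ 1 be an integer. Suppose that for each integer i with 0 ≤ i < j we are given a finite set D̃_i of natural numbers with D̃_i ⊆ {n : q_{k+2i}/2 ≤ n < q_{k+2i}} and (1/8)·v·q_{k+2i} ≤ #D̃_i ≤ v·q_{k+2i}. Then there exist subsets D_i ⊆ D̃_i for 0 ≤ i < j such that: (i) the closed balls B(nα, a/(δ·n)) in ℝ/ℤ, taken over all n ∈ ⋃_{0≤i<j} D_i, are pairwise disjoint; and (ii) for each 0 ≤ i < j, #D_i ≥ (1/2)·#D̃_i ≥ (1/16)·v·q_{k+2i}. -/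
/-!
Keep an element `n'` of `D̃_{i'}` unless its ball meets the ball of some element of an earlier
block. By the best-approximation property of the convergents, distinct `n, n' < q_N` satisfy
`‖(n - n')α‖ ≥ 1/(2q_N)`. Within one block the radii are at most `2a/(δq_N) < 1/(4q_N)`, so these
balls are disjoint already. Across blocks, the points `n'α`, `n' ∈ D̃_{i'}`, are
`1/(2q_{k+2i'})`-separated, so a ball from block `i < i'` meets at most
`16a q_{k+2i'}/(δ q_{k+2i})` of those balls. Summing over the at most `v q_{k+2i}` elements of
each earlier block removes at most `16jav q_{k+2i'}/δ ≤ v q_{k+2i'}/32 ≤ #D̃_{i'}/4` elements.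
-/

open Filter MeasureTheory Set
open scoped ENNReal NNReal Classical

attribute [local instance] Real.fact_zero_lt_one

open GenContFract

theorem one_le_qden (α : ℝ) (n : ℕ) : 1 ≤ qden α n := by
  induction n with
  | zero => simp [qden]
  | succ n ih => exact ih.trans of_den_mono

theorem qden_mono (α : ℝ) : Monotone (qden α) :=
  monotone_nat_of_le_succ fun _ => of_den_mono

theorem Int.ne_zero_and_mul_nonpos_of_eq_add {m x y B B' : ℤ} (hB' : 0 ≤ B') (hm : m ≠ 0)
    (hmB : |m| < B) (h : m = x * B + y * B') : y ≠ 0 ∧ x * y ≤ 0 := by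
  rw [abs_lt] at hmB
  refine ⟨?_, ?_⟩
  · rintro rfl
    rcases lt_trichotomy x 0 with hx | rfl | hx
    · nlinarith
    · simp_all
    · nlinarith
  · by_contra! hxy
    rcases lt_or_gt_of_ne (left_ne_zero_of_mul hxy.ne') with hx | hx
    · nlinarith [neg_of_mul_pos_right hxy hx.le]
    · nlinarith [pos_of_mul_pos_right hxy hx.le]

namespace Irrational

variable {α : ℝ} (hα : Irrational α)
include hα

theorem not_terminatedAt (n : ℕ) : ¬(GenContFract.of α).TerminatedAt n := fun h => by
  obtain ⟨q, hq⟩ := (terminates_iff_rat α).1 ⟨n, h⟩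
  exact hα.ne_rat q hq

theorem exists_int_s_get?_eq (n : ℕ) : ∃ z : ℤ, 1 ≤ z ∧
    (GenContFract.of α).s.get? n = some ⟨1, (z : ℝ)⟩ := by
  obtain ⟨⟨a, b⟩, hgp⟩ := Option.ne_none_iff_exists'.1 (hα.not_terminatedAt n)
  obtain ⟨z, rfl⟩ := exists_int_eq_of_partDen (partDen_eq_s_b hgp)
  obtain rfl : a = 1 := of_partNum_eq_one (partNum_eq_s_a hgp)
  have hz : (1 : ℝ) ≤ z := of_one_le_get?_partDen (partDen_eq_s_b hgp)
  exact ⟨z, mod_cast hz, hgp⟩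

theorem exists_int_contsAux_eq (n : ℕ) :
    ∃ A B : ℤ, (GenContFract.of α).contsAux n = ⟨A, B⟩ := by
  induction n using Nat.twoStepInduction with
  | zero => exact ⟨1, 0, by simp⟩
  | one => exact ⟨⌊α⌋, 1, by simp [of_h_eq_floor]⟩
  | more n ih₀ ih₁ =>
    obtain ⟨A', B', h₀⟩ := ih₀
    obtain ⟨A, B, h₁⟩ := ih₁
    obtain ⟨z, -, hz⟩ := hα.exists_int_s_get?_eq n
    exact ⟨z * A + A', z * B + B', by rw [contsAux_recurrence hz h₀ h₁]; push_cast; ring_nf⟩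

theorem exists_int_nums_eq_qden_eq (n : ℕ) :
    ∃ p q : ℤ, (GenContFract.of α).nums n = p ∧ qden α n = q := by
  obtain ⟨p, q, h⟩ := hα.exists_int_contsAux_eq (n + 1)
  exact ⟨p, q, by rw [num_eq_conts_a, nth_cont_eq_succ_nth_contAux, h],
    by rw [qden, den_eq_conts_b, nth_cont_eq_succ_nth_contAux, h]⟩

theorem two_mul_qden_le (n : ℕ) : 2 * qden α n ≤ qden α (n + 2) := by
  obtain ⟨z, hz, hs⟩ := hα.exists_int_s_get?_eq (n + 1)
  have hrec : qden α (n + 2) = z * qden α (n + 1) + qden α n := by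
    simpa [qden] using dens_recurrence hs rfl rfl
  have hz' : (1 : ℝ) ≤ z := by exact_mod_cast hz
  nlinarith [qden_mono α n.le_succ, one_le_qden α (n + 1)]

theorem nums_mul_qden_sub_qden_mul_nums (n : ℕ) :
    (GenContFract.of α).nums n * qden α (n + 1) - qden α n * (GenContFract.of α).nums (n + 1)
      = (-1) ^ (n + 1) :=
  SimpContFract.determinant (s := SimpContFract.of α) (hα.not_terminatedAt n)

theorem inv_two_mul_qden_le_neg_one_pow_mul (n : ℕ) :
    (2 * qden α (n + 1))⁻¹ ≤
      (-1) ^ n * (qden α n * α - (GenContFract.of α).nums n) := by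
  set p := (GenContFract.of α).nums
  have hq₀ := one_le_qden α n
  have hq₁ := one_le_qden α (n + 1)
  have hq₂ := hα.two_mul_qden_le n
  have hdet : p n * qden α (n + 1) - qden α n * p (n + 1) = (-1) ^ (n + 1) :=
    hα.nums_mul_qden_sub_qden_mul_nums n
  set d := α - p (n + 1) / qden α (n + 1) with hd_def
  have hd : |d| ≤ 1 / (qden α (n + 1) * qden α (n + 2)) :=
    abs_sub_convs_le (hα.not_terminatedAt (n + 1))
  have hsplit : (-1) ^ n * (qden α n * α - p n) =
      (qden α (n + 1))⁻¹ + (-1) ^ n * qden α n * d := by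
    have hsq : ((-1 : ℝ) ^ n) ^ 2 = 1 := by rw [← pow_mul, mul_comm, pow_mul]; norm_num
    rw [hd_def]
    field_simp
    linear_combination (-(-1) ^ n) * hdet + hsq
  have hsmall : |(-1) ^ n * qden α n * d| ≤ (2 * qden α (n + 1))⁻¹ := by
    rw [abs_mul, abs_mul, abs_pow, abs_neg, abs_one, one_pow, one_mul, abs_of_pos (by linarith)]
    calc qden α n * |d| ≤ qden α n * (1 / (qden α (n + 1) * qden α (n + 2))) := by gcongr
      _ ≤ (2 * qden α (n + 1))⁻¹ := by
        rw [mul_one_div, div_le_iff₀ (by nlinarith)]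
        field_simp
        linarith
  calc (2 * qden α (n + 1))⁻¹ = (qden α (n + 1))⁻¹ - (2 * qden α (n + 1))⁻¹ := by
        field_simp; ring
    _ ≤ (qden α (n + 1))⁻¹ + (-1) ^ n * qden α n * d := by
        linarith [neg_abs_le ((-1) ^ n * qden α n * d)]
    _ = _ := hsplit.symm

theorem inv_two_mul_qden_le_abs_mul_sub {M : ℕ} {m p : ℤ} (hm : m ≠ 0)
    (hmM : |(m : ℝ)| < qden α (M + 1)) : (2 * qden α (M + 1))⁻¹ ≤ |m * α - p| := by
  obtain ⟨A', B', hA', hB'⟩ := hα.exists_int_nums_eq_qden_eq M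
  obtain ⟨A, B, hA, hB⟩ := hα.exists_int_nums_eq_qden_eq (M + 1)
  have hdet : A' * B - B' * A = (-1) ^ (M + 1) := by
    have := hα.nums_mul_qden_sub_qden_mul_nums M
    rw [hA', hB', hA, hB] at this
    exact_mod_cast this
  -- `(m, p)` in the basis `(q_{M+1}, p_{M+1}), (q_M, p_M)`, which is unimodular by `hdet`
  set ε : ℤ := (-1) ^ (M + 1)
  have hε : ε * ε = 1 := by rw [← mul_pow]; norm_num
  set x := ε * (m * A' - p * B')
  set y := ε * (p * B - m * A)
  have hmxy : m = x * B + y * B' := by linear_combination (-ε * m) * hdet - m * hε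
  have hpxy : p = x * A + y * A' := by linear_combination (-ε * p) * hdet - p * hε
  have hB'1 : (1 : ℤ) ≤ B' := by exact_mod_cast hB' ▸ one_le_qden α M
  obtain ⟨hy, hxy⟩ := Int.ne_zero_and_mul_nonpos_of_eq_add (by omega) hm
    (by rw [hB] at hmM; exact_mod_cast hmM) hmxy
  set c₁ := (-1) ^ M * (qden α M * α - (GenContFract.of α).nums M)
  set c₂ := (-1) ^ (M + 1) * (qden α (M + 1) * α - (GenContFract.of α).nums (M + 1))
  have hc₁ : (2 * qden α (M + 1))⁻¹ ≤ c₁ := hα.inv_two_mul_qden_le_neg_one_pow_mul M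
  have hc₂ : 0 < c₂ := (inv_pos.2 (by linarith [one_le_qden α (M + 2)])).trans_le
    (hα.inv_two_mul_qden_le_neg_one_pow_mul (M + 1))
  have hsq : ((-1 : ℝ) ^ M) ^ 2 = 1 := by rw [← pow_mul, mul_comm, pow_mul]; norm_num
  have hsplit : (m : ℝ) * α - p = (-1) ^ M * (y * c₁ - x * c₂) := by
    rw [hmxy, hpxy]
    push_cast
    rw [← hA', ← hB', ← hA, ← hB]
    linear_combination (-(x * (qden α (M + 1) * α - (GenContFract.of α).nums (M + 1)) +
      y * (qden α M * α - (GenContFract.of α).nums M))) * hsq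
  rw [hsplit, abs_mul, abs_pow, abs_neg, abs_one, one_pow, one_mul]
  have hc₁pos : 0 < c₁ := (inv_pos.2 (by linarith [one_le_qden α (M + 1)])).trans_le hc₁
  refine hc₁.trans ?_
  rcases lt_or_gt_of_ne hy with hy | hy
  · have hx : (0 : ℝ) ≤ x := by exact_mod_cast nonneg_of_mul_nonpos_left hxy hy
    have hy : (y : ℝ) ≤ -1 := by exact_mod_cast Int.le_sub_one_of_lt hy
    have := mul_le_mul_of_nonneg_right hy hc₁pos.le
    have := mul_nonneg hx hc₂.le
    rw [abs_of_neg (by linarith)]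
    linarith
  · have hx : (x : ℝ) ≤ 0 := by exact_mod_cast nonpos_of_mul_nonpos_left hxy hy
    have hy : (1 : ℝ) ≤ y := by exact_mod_cast hy
    have := mul_le_mul_of_nonneg_right hy hc₁pos.le
    have := mul_nonneg (neg_nonneg.2 hx) hc₂.le
    rw [abs_of_pos (by linarith)]
    linarith

theorem inv_two_mul_qden_le_norm_coe {N : ℕ} {m : ℤ} (hm : m ≠ 0)
    (hmN : |(m : ℝ)| < qden α N) : (2 * qden α N)⁻¹ ≤ ‖((m * α : ℝ) : UnitAddCircle)‖ := by
  rcases N with _ | M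
  · have : |(m : ℝ)| < 1 := by simpa [qden] using hmN
    exact absurd (Int.abs_lt_one_iff.1 (mod_cast this)) hm
  · rw [UnitAddCircle.norm_eq]
    exact hα.inv_two_mul_qden_le_abs_mul_sub hm hmN

theorem inv_two_mul_qden_le_dist {N n n' : ℕ} (hne : n ≠ n') (hn : (n : ℝ) < qden α N)
    (hn' : (n' : ℝ) < qden α N) :
    (2 * qden α N)⁻¹ ≤ dist ((n * α : ℝ) : UnitAddCircle) ((n' * α : ℝ) : UnitAddCircle) := by
  rw [dist_eq_norm, ← AddCircle.coe_sub, ← sub_mul]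
  have hnn' : |((n - n' : ℤ) : ℝ)| < qden α N := by
    push_cast
    rw [abs_lt]
    constructor <;> linarith [Nat.cast_nonneg (α := ℝ) n, Nat.cast_nonneg (α := ℝ) n']
  simpa using hα.inv_two_mul_qden_le_norm_coe (by omega) hnn'

end Irrational

theorem UnitAddCircle.norm_coe_le_abs (t : ℝ) : ‖(t : UnitAddCircle)‖ ≤ |t| := by
  simpa [UnitAddCircle.norm_eq] using round_le t 0

theorem Real.card_mul_le_of_abs_sub_le {ι : Type*} (T : Finset ι) (y : ι → ℝ) {x R s : ℝ}
    (hR : 0 ≤ R) (hs : 0 ≤ s) (hy : ∀ i ∈ T, |y i - x| ≤ R)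
    (hsep : ∀ i ∈ T, ∀ j ∈ T, i ≠ j → s ≤ |y i - y j|) : (T.card : ℝ) * s ≤ 2 * R + s := by
  -- the intervals of length `s` around the points are disjoint and lie in one of length `2R + s`
  have hdisj : Set.PairwiseDisjoint ↑T fun i => Metric.ball (y i) (s / 2) := fun i hi j hj hij =>
    Metric.ball_disjoint_ball (by rw [Real.dist_eq]; linarith [hsep i hi j hj hij])
  have hsub : ⋃ i ∈ T, Metric.ball (y i) (s / 2) ⊆ Metric.ball x (R + s / 2) :=
    iUnion₂_subset fun i hi => Metric.ball_subset_ball' (by rw [Real.dist_eq]; linarith [hy i hi])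
  have hvol := measure_mono (μ := volume) hsub
  rw [measure_biUnion_finset hdisj fun _ _ => measurableSet_ball] at hvol
  simp only [Real.volume_ball, Finset.sum_const, nsmul_eq_mul] at hvol
  rw [← ENNReal.ofReal_natCast, ← ENNReal.ofReal_mul (Nat.cast_nonneg _),
    ENNReal.ofReal_le_ofReal_iff (by linarith)] at hvol
  linarith

theorem UnitAddCircle.card_mul_le_of_dist_le {ι : Type*} (T : Finset ι) (f : ι → UnitAddCircle)
    {x : UnitAddCircle} {R s : ℝ} (hR : 0 ≤ R) (hs : 0 ≤ s) (hf : ∀ i ∈ T, dist (f i) x ≤ R)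
    (hsep : ∀ i ∈ T, ∀ j ∈ T, i ≠ j → s ≤ dist (f i) (f j)) : (T.card : ℝ) * s ≤ 2 * R + s := by
  obtain ⟨x₀, rfl⟩ := QuotientAddGroup.mk_surjective x
  choose w hw using fun i => QuotientAddGroup.mk_surjective (f i)
  -- lift each point to the representative nearest to `x₀`
  set y := fun i => w i - round (w i - x₀)
  have hcoe (i : ι) : ((y i : ℝ) : UnitAddCircle) = f i := by
    simp [y, ← hw i]
  refine Real.card_mul_le_of_abs_sub_le T y (x := x₀) hR hs (fun i hi => ?_) fun i hi j hj hij => ?_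
  · have := hf i hi
    rw [← hw i, dist_eq_norm, ← AddCircle.coe_sub, UnitAddCircle.norm_eq] at this
    simpa [y, sub_right_comm] using this
  · refine (hsep i hi j hj hij).trans ?_
    rw [← hcoe i, ← hcoe j, dist_eq_norm, ← AddCircle.coe_sub]
    exact UnitAddCircle.norm_coe_le_abs _

open Finset

theorem Finset.card_le_card_filter_forall_add_sum_sum {ι κ β : Type*} (T : Finset β)
    (I : Finset ι) (S : ι → Finset κ) (P : κ → β → Prop) :
    #T ≤ #(T.filter fun x => ∀ i ∈ I, ∀ n ∈ S i, P n x) +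
      ∑ i ∈ I, ∑ n ∈ S i, #(T.filter fun x => ¬P n x) := by
  rw [← card_filter_add_card_filter_not fun x => ∀ i ∈ I, ∀ n ∈ S i, P n x]
  gcongr
  calc _ ≤ #(I.biUnion fun i => (S i).biUnion fun n => T.filter fun x => ¬P n x) := by
        refine card_le_card fun x hx => ?_
        simp only [Finset.mem_filter, not_forall] at hx
        obtain ⟨hxT, i, hi, n, hn, hP⟩ := hx
        exact mem_biUnion.2 ⟨i, hi, mem_biUnion.2 ⟨n, hn, Finset.mem_filter.2 ⟨hxT, hP⟩⟩⟩
    _ ≤ ∑ i ∈ I, #((S i).biUnion fun n => T.filter fun x => ¬P n x) := card_biUnion_le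
    _ ≤ _ := sum_le_sum fun i _ => card_biUnion_le

theorem div_mul_le_two_mul_div_mul_of_half_le {a δ q t : ℝ} (ha : 0 ≤ a) (hδ : 0 < δ)
    (hq : 0 < q) (ht : q / 2 ≤ t) : a / (δ * t) ≤ 2 * a / (δ * q) := by
  rw [div_le_div_iff₀ (by nlinarith) (by positivity)]
  nlinarith [mul_nonneg ha hδ.le]

def orbitBall (α a δ : ℝ) (n : ℕ) : Set UnitAddCircle :=
  Metric.closedBall ((n * α : ℝ) : UnitAddCircle) (a / (δ * n))

noncomputable def sparsify (α a δ : ℝ) (Dt : ℕ → Finset ℕ) (i' : ℕ) : Finset ℕ :=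
  (Dt i').filter fun n' => ∀ i ∈ range i', ∀ n ∈ Dt i,
    Disjoint (orbitBall α a δ n) (orbitBall α a δ n')

namespace Irrational

variable {α : ℝ} (hα : Irrational α) {a δ : ℝ}
include hα

theorem disjoint_orbitBall (ha : 0 ≤ a) (hδ : 0 < δ) (h8a : 8 * a < δ) {N n n' : ℕ}
    (hn : qden α N / 2 ≤ n ∧ n < qden α N) (hn' : qden α N / 2 ≤ n' ∧ n' < qden α N)
    (hne : n ≠ n') : Disjoint (orbitBall α a δ n) (orbitBall α a δ n') := by
  have hq := one_le_qden α N
  refine Metric.closedBall_disjoint_closedBall ?_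
  calc a / (δ * n) + a / (δ * n') ≤ 2 * a / (δ * qden α N) + 2 * a / (δ * qden α N) :=
        add_le_add (div_mul_le_two_mul_div_mul_of_half_le ha hδ (by linarith) hn.1)
          (div_mul_le_two_mul_div_mul_of_half_le ha hδ (by linarith) hn'.1)
    _ < (2 * qden α N)⁻¹ := by
        field_simp
        nlinarith
    _ ≤ _ := hα.inv_two_mul_qden_le_dist hne hn.2 hn'.2

theorem card_filter_not_disjoint_orbitBall_le {r : ℝ} (hr : 0 ≤ r) {N n : ℕ} {T : Finset ℕ}
    (hn : n < qden α N) (hrn : a / (δ * n) ≤ r)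
    (hT : ∀ n' ∈ T, n' < qden α N ∧ a / (δ * n') ≤ r) (hnT : n ∉ T) :
    (#(T.filter fun n' => ¬Disjoint (orbitBall α a δ n) (orbitBall α a δ n')) : ℝ)
      ≤ 8 * r * qden α N := by
  set B := T.filter fun n' => ¬Disjoint (orbitBall α a δ n) (orbitBall α a δ n')
  have hq := one_le_qden α N
  have hB : ∀ m ∈ insert n B, (m : ℝ) < qden α N ∧ a / (δ * m) ≤ r := by
    simp only [Finset.mem_insert, B, Finset.mem_filter]
    rintro m (rfl | ⟨hm, -⟩)
    exacts [⟨hn, hrn⟩, hT m hm]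
  have hpack := UnitAddCircle.card_mul_le_of_dist_le (insert n B)
    (fun m => ((m * α : ℝ) : UnitAddCircle)) (x := ((n * α : ℝ) : UnitAddCircle))
    (R := 2 * r) (s := (2 * qden α N)⁻¹) (by linarith) (by positivity) ?_
    fun m hm m' hm' hne => hα.inv_two_mul_qden_le_dist hne (hB m hm).1 (hB m' hm').1
  · rw [card_insert_of_notMem fun h => hnT (mem_filter.1 h).1] at hpack
    push_cast at hpack
    change ((#B : ℝ) + 1) * _ ≤ _ at hpack
    calc (#B : ℝ) = #B * (2 * qden α N)⁻¹ * (2 * qden α N) := by field_simp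
      _ ≤ 2 * (2 * r) * (2 * qden α N) :=
        mul_le_mul_of_nonneg_right (by linarith) (by positivity)
      _ = 8 * r * qden α N := by ring
  · simp only [Finset.mem_insert, B, Finset.mem_filter]
    rintro m (rfl | ⟨hm, hnd⟩)
    · simpa using mul_nonneg zero_le_two hr
    · have := not_lt.1 fun h => hnd (Metric.closedBall_disjoint_closedBall h)
      rw [dist_comm]
      linarith [(hT m hm).2]

theorem sum_card_filter_not_disjoint_orbitBall_le (ha : 0 ≤ a) (hδ : 0 < δ) {N N' : ℕ}
    (hNN' : 2 * qden α N ≤ qden α N') {S T : Finset ℕ}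
    (hS : ∀ n ∈ S, qden α N / 2 ≤ n ∧ n < qden α N)
    (hT : ∀ n' ∈ T, qden α N' / 2 ≤ n' ∧ n' < qden α N') :
    ∑ n ∈ S, (#(T.filter fun n' => ¬Disjoint (orbitBall α a δ n) (orbitBall α a δ n')) : ℝ)
      ≤ #S * (16 * a * qden α N' / (δ * qden α N)) := by
  have hq := one_le_qden α N
  rw [← nsmul_eq_mul]
  refine sum_le_card_nsmul _ _ _ fun n hn => ?_
  have hr : a / (δ * n) ≤ 2 * a / (δ * qden α N) :=
    div_mul_le_two_mul_div_mul_of_half_le ha hδ (by linarith) (hS n hn).1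
  have hrT (n' : ℕ) (hn' : n' ∈ T) : a / (δ * n') ≤ 2 * a / (δ * qden α N) :=
    (div_mul_le_two_mul_div_mul_of_half_le ha hδ (by linarith) (hT n' hn').1).trans
      (by gcongr; linarith)
  have hnT : n ∉ T := fun h => by linarith [(hS n hn).2, (hT n h).1]
  calc _ ≤ 8 * (2 * a / (δ * qden α N)) * qden α N' :=
        hα.card_filter_not_disjoint_orbitBall_le (by positivity) (by linarith [(hS n hn).2])
          hr (fun n' hn' => ⟨(hT n' hn').2, hrT n' hn'⟩) hnT
    _ = _ := by ring

theorem card_le_card_sparsify_add (ha : 0 ≤ a) (hδ : 0 < δ) {v : ℝ} (hv : 0 ≤ v)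
    {j k : ℕ} (hja : (j : ℝ) * a ≤ δ / 512) {Dt : ℕ → Finset ℕ}
    (hDt : ∀ i < j, ∀ n ∈ Dt i, qden α (k + 2 * i) / 2 ≤ n ∧ n < qden α (k + 2 * i))
    (hcard : ∀ i < j, (#(Dt i) : ℝ) ≤ v * qden α (k + 2 * i)) {i' : ℕ} (hi' : i' < j) :
    (#(Dt i') : ℝ) ≤ #(sparsify α a δ Dt i') + v * qden α (k + 2 * i') / 32 := by
  set Q := fun i => qden α (k + 2 * i)
  have hQ' := one_le_qden α (k + 2 * i')
  have hblock : ∀ i ∈ range i', ∑ n ∈ Dt i,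
      (#((Dt i').filter fun n' => ¬Disjoint (orbitBall α a δ n) (orbitBall α a δ n')) : ℝ)
        ≤ 16 * a * v * Q i' / δ := by
    intro i hi
    have hii' := mem_range.1 hi
    have hQ : 0 < Q i := zero_lt_one.trans_le (one_le_qden α _)
    have hdouble : 2 * Q i ≤ Q i' :=
      (hα.two_mul_qden_le _).trans (qden_mono α (by omega))
    calc _ ≤ #(Dt i) * (16 * a * Q i' / (δ * Q i)) :=
          hα.sum_card_filter_not_disjoint_orbitBall_le ha hδ hdouble (hDt i (hii'.trans hi'))
            (hDt i' hi')
      _ ≤ v * Q i * (16 * a * Q i' / (δ * Q i)) := by gcongr; exact hcard i (hii'.trans hi')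
      _ = 16 * a * v * Q i' / δ := by field_simp
  calc (#(Dt i') : ℝ)
      ≤ #(sparsify α a δ Dt i') + ∑ i ∈ range i', ∑ n ∈ Dt i,
          (#((Dt i').filter fun n' => ¬Disjoint (orbitBall α a δ n) (orbitBall α a δ n')) : ℝ) :=
        mod_cast card_le_card_filter_forall_add_sum_sum (Dt i') (range i') Dt
          fun n n' => Disjoint (orbitBall α a δ n) (orbitBall α a δ n')
    _ ≤ _ + ∑ i ∈ range i', 16 * a * v * Q i' / δ := by gcongr with i hi; exact hblock i hi
    _ = _ + i' * a * (16 * v * Q i' / δ) := by rw [sum_const, card_range, nsmul_eq_mul]; ring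
    _ ≤ _ + δ / 512 * (16 * v * Q i' / δ) := by
        gcongr
        exact (mul_le_mul_of_nonneg_right (mod_cast hi'.le) ha).trans hja
    _ = _ := by field_simp; ring

end Irrational

theorem exists_disjoint_subcollections_general (α : ℝ) (hα : Irrational α)
    (δ a : ℝ) (hδ : 0 < δ) (ha0 : 0 < a)
    (ha : a < min ((2 : ℝ) ^ (-10 : ℤ)) ((2 : ℝ) ^ (-10 : ℤ) * δ))
    (j : ℕ)
    (hj₂ : (j : ℝ) * 2 ^ 9 * a * δ⁻¹ ≤ 1)
    (v : ℝ) (hv : 0 < v) (k : ℕ)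
    (Dt : ℕ → Finset ℕ)
    (hDt : ∀ i < j, ∀ n ∈ Dt i,
      qden α (k + 2 * i) / 2 ≤ (n : ℝ) ∧ (n : ℝ) < qden α (k + 2 * i))
    (hDtcard : ∀ i < j,
      (1 / 8) * v * qden α (k + 2 * i) ≤ ((Dt i).card : ℝ) ∧
      ((Dt i).card : ℝ) ≤ v * qden α (k + 2 * i)) :
    ∃ D : ℕ → Finset ℕ,
      (∀ i < j, D i ⊆ Dt i) ∧
      (∀ i < j, ∀ i' < j, ∀ n ∈ D i, ∀ n' ∈ D i', n ≠ n' →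
        Disjoint
          (Metric.closedBall (((n : ℝ) * α : ℝ) : AddCircle (1 : ℝ)) (a / (δ * (n : ℝ))))
          (Metric.closedBall (((n' : ℝ) * α : ℝ) : AddCircle (1 : ℝ)) (a / (δ * (n' : ℝ))))) ∧
      (∀ i < j,
        (1 / 2) * ((Dt i).card : ℝ) ≤ ((D i).card : ℝ) ∧
        (1 / 16) * v * qden α (k + 2 * i) ≤ ((D i).card : ℝ)) := by
  have h8a : 8 * a < δ := by
    have := ha.trans_le (min_le_right _ _)
    norm_num at this
    linarith
  have hja : (j : ℝ) * a ≤ δ / 512 := by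
    rw [mul_inv_le_iff₀ hδ] at hj₂
    linarith
  refine ⟨sparsify α a δ Dt, fun i _ => filter_subset _ _, ?_, ?_⟩
  · intro i hi i' hi' n hn n' hn' hne
    rcases lt_trichotomy i i' with h | rfl | h
    · exact (Finset.mem_filter.1 hn').2 i (mem_range.2 h) n (filter_subset _ _ hn)
    · exact hα.disjoint_orbitBall ha0.le hδ h8a (hDt i hi n (filter_subset _ _ hn))
        (hDt i hi n' (filter_subset _ _ hn')) hne
    · exact ((Finset.mem_filter.1 hn).2 i' (mem_range.2 h) n' (filter_subset _ _ hn')).symm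
  · intro i hi
    have := hα.card_le_card_sparsify_add ha0.le hδ hv.le hja hDt
      (fun i hi => (hDtcard i hi).2) hi
    have := hDtcard i hi
    constructor <;> linarith

/-- Proposition 3.3 (sparsification): given `δ > 0`, `0 < a < min{2^{-10}, 2^{-10}δ}`,
`j ≥ 1` with `1/2 ≤ j·2⁹·a·δ⁻¹ ≤ 1`, `v > 0`, `k ≥ 1`, and finite sets `D̃_i` of integers
in `[q_{k+2i}/2, q_{k+2i})` of cardinality between `(1/8)·v·q_{k+2i}` and `v·q_{k+2i}`,
there are subsets `D_i ⊆ D̃_i` whose associated balls `B(nα, a/(δn))` in `ℝ/ℤ` are pairwise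
disjoint and with `#D_i ≥ (1/2)#D̃_i ≥ (1/16)·v·q_{k+2i}`. -/
theorem exists_disjoint_subcollections (α : ℝ) (hα : Irrational α)
    (δ a : ℝ) (hδ : 0 < δ) (ha0 : 0 < a)
    (ha : a < min ((2 : ℝ) ^ (-10 : ℤ)) ((2 : ℝ) ^ (-10 : ℤ) * δ))
    (j : ℕ) (hj : 1 ≤ j)
    (hj₁ : 1 / 2 ≤ (j : ℝ) * 2 ^ 9 * a * δ⁻¹) (hj₂ : (j : ℝ) * 2 ^ 9 * a * δ⁻¹ ≤ 1)
    (v : ℝ) (hv : 0 < v) (k : ℕ) (hk : 1 ≤ k)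
    (Dt : ℕ → Finset ℕ)
    (hDt : ∀ i < j, ∀ n ∈ Dt i,
      qden α (k + 2 * i) / 2 ≤ (n : ℝ) ∧ (n : ℝ) < qden α (k + 2 * i))
    (hDtcard : ∀ i < j,
      (1 / 8) * v * qden α (k + 2 * i) ≤ ((Dt i).card : ℝ) ∧
      ((Dt i).card : ℝ) ≤ v * qden α (k + 2 * i)) :
    ∃ D : ℕ → Finset ℕ,
      (∀ i < j, D i ⊆ Dt i) ∧
      (∀ i < j, ∀ i' < j, ∀ n ∈ D i, ∀ n' ∈ D i', n ≠ n' →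
        Disjoint
          (Metric.closedBall (((n : ℝ) * α : ℝ) : AddCircle (1 : ℝ)) (a / (δ * (n : ℝ))))
          (Metric.closedBall (((n' : ℝ) * α : ℝ) : AddCircle (1 : ℝ)) (a / (δ * (n' : ℝ))))) ∧
      (∀ i < j,
        (1 / 2) * ((Dt i).card : ℝ) ≤ ((D i).card : ℝ) ∧
        (1 / 16) * v * qden α (k + 2 * i) ≤ ((D i).card : ℝ)) :=
  exists_disjoint_subcollections_general α hα δ a hδ ha0 ha j hj₂ v hv k Dt hDt hDtcard
end

section
/- Let Σ ⊂ ℝ be a compact set and let 𝒩 : ℝ → ℝ be a continuous non-decreasing function with 𝒩(Σ) = [0,1] which is locally constant on ℝ \ Σ, and suppose there exists 0 < c < 1 such that for every E ∈ Σ and every 0 < ε < 1 one has c·ε^{3/2} ≤ 𝒩(E+ε) − 𝒩(E−ε) ≤ c^{−1}·ε^{1/2}. Let D ⊆ [0,1] and set F = Σ ∩ 𝒩^{−1}(D). Then for every s > 0, 3^{−s}·ℋ^{ω_s}(D) ≤ ℋ^{ω_s}(F) ≤ 3^{s+1}·ℋ^{ω_s}(D). -/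
/-!
Both inequalities are proved by converting covers. An interval of length `ℓ` around a point
of `Σ` is mapped by `𝒩` into an interval of length `≲ ℓ^{1/2}`, so covers of `F` give covers
of `D`. Conversely, if a point of `F' = Σ ∩ 𝒩⁻¹(I)` had points of `F'` at distance `≥ ρ` on
both sides, the lower bound would make `𝒩` grow by `c ρ^{3/2}` on `F'`; with `c ρ^{3/2} = |I|`
this is impossible, so `F'` lies within `ρ` of its infimum or its supremum and is covered by two
intervals of length `3ρ ≍ |I|^{2/3}`. Finally `-log (K ℓ^p) ≥ -(log ℓ)/3` for `p ≥ 1/2` and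
small `ℓ`, so `ω_s (K ℓ^p) ≤ 3^s ω_s(ℓ)`: the replacements cost a factor `3^s`, resp.
`2·3^s ≤ 3^{s+1}`.
-/
open Filter MeasureTheory Set
open scoped ENNReal NNReal Classical

open Topology

noncomputable def gaugeContent (ω : ℝ → ℝ) (ε : ℝ) (S : Set ℝ) : ℝ≥0∞ :=
  ⨅ (a : ℕ → ℝ) (b : ℕ → ℝ) (_ : S ⊆ ⋃ i, Ioo (a i) (b i))
    (_ : ∀ i, a i ≤ b i ∧ b i - a i ≤ ε), ∑' i, ENNReal.ofReal (ω (b i - a i))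

lemma gaugeHaus_eq_iSup_gaugeContent (ω : ℝ → ℝ) (S : Set ℝ) :
    gaugeHaus ω S = ⨆ (ε : ℝ) (_ : 0 < ε), gaugeContent ω ε S :=
  rfl

lemma gaugeContent_le_tsum {ω : ℝ → ℝ} (hω : ω 0 = 0) {ε : ℝ} (hε : 0 ≤ ε) {S : Set ℝ}
    {ι : Type*} [Countable ι] (a b : ι → ℝ) (hS : S ⊆ ⋃ i, Ioo (a i) (b i))
    (hab : ∀ i, a i ≤ b i ∧ b i - a i ≤ ε) :
    gaugeContent ω ε S ≤ ∑' i, ENNReal.ofReal (ω (b i - a i)) := by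
  obtain ⟨f, hf⟩ := Countable.exists_injective_nat ι
  -- indices outside the range of `f` get empty intervals, which cost `ω 0 = 0`
  set a' := Function.extend f a 0
  set b' := Function.extend f b 0
  have ha' : ∀ i, a' (f i) = a i := hf.extend_apply a 0
  have hb' : ∀ i, b' (f i) = b i := hf.extend_apply b 0
  have hout : ∀ n ∉ range f, a' n = 0 ∧ b' n = 0 := fun n hn =>
    ⟨Function.extend_apply' _ _ _ hn, Function.extend_apply' _ _ _ hn⟩
  have hcov : S ⊆ ⋃ n, Ioo (a' n) (b' n) := fun x hx => by
    obtain ⟨i, hi⟩ := mem_iUnion.1 (hS hx)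
    exact mem_iUnion.2 ⟨f i, by rwa [ha', hb']⟩
  have hlen : ∀ n, a' n ≤ b' n ∧ b' n - a' n ≤ ε := fun n => by
    by_cases hn : n ∈ range f
    · obtain ⟨i, rfl⟩ := hn
      rw [ha', hb']
      exact hab i
    · simp [hout n hn, hε]
  have hsupp : Function.support (fun n => ENNReal.ofReal (ω (b' n - a' n))) ⊆ range f := by
    intro n hn
    by_contra hn'
    simp [hout n hn', hω] at hn
  calc gaugeContent ω ε S ≤ ∑' n, ENNReal.ofReal (ω (b' n - a' n)) :=
        iInf_le_of_le a' <| iInf_le_of_le b' <| iInf₂_le hcov hlen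
    _ = ∑' i, ENNReal.ofReal (ω (b i - a i)) := by
        simp only [← hf.tsum_eq hsupp, ha', hb']

theorem gaugeHaus_le_mul_of_forall_interval {ω : ℝ → ℝ} (hω : ω 0 = 0) {S T : Set ℝ}
    {κ : Type*} [Countable κ] {C : ℝ≥0∞} (hC0 : C ≠ 0) (hC : C ≠ ∞) (R : ℝ → ℝ → Prop)
    (hR : ∀ t ∈ T, ∃ s ∈ S, R s t)
    (hrep : ∀ δ > 0, ∀ᶠ ℓ in 𝓝[>] 0, ∀ a b, b - a = ℓ → (∃ s ∈ Ioo a b, ∃ t ∈ T, R s t) →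
      ∃ a' b' : κ → ℝ, (∀ s ∈ Ioo a b, ∀ t ∈ T, R s t → ∃ j, t ∈ Ioo (a' j) (b' j)) ∧
        (∀ j, a' j ≤ b' j ∧ b' j - a' j ≤ δ) ∧
        ∑' j, ENNReal.ofReal (ω (b' j - a' j)) ≤ C * ENNReal.ofReal (ω (b - a))) :
    gaugeHaus ω T ≤ C * gaugeHaus ω S := by
  rw [gaugeHaus_eq_iSup_gaugeContent, gaugeHaus_eq_iSup_gaugeContent]
  refine iSup₂_le fun δ hδ => ?_
  obtain ⟨ε, hε, hεrep⟩ := mem_nhdsGT_iff_exists_Ioc_subset.1 (hrep δ hδ)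
  refine le_trans ?_ (mul_le_mul_right (le_iSup₂_of_le ε hε le_rfl) C)
  simp only [gaugeContent, ENNReal.mul_iInf_of_ne hC0 hC]
  refine le_iInf₂ fun a b => le_iInf₂ fun hS hab => ?_
  have hpiece : ∀ i, ∃ a' b' : κ → ℝ,
      (∀ s ∈ Ioo (a i) (b i), ∀ t ∈ T, R s t → ∃ j, t ∈ Ioo (a' j) (b' j)) ∧
      (∀ j, a' j ≤ b' j ∧ b' j - a' j ≤ δ) ∧
      ∑' j, ENNReal.ofReal (ω (b' j - a' j)) ≤ C * ENNReal.ofReal (ω (b i - a i)) := by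
    intro i
    by_cases hi : ∃ s ∈ Ioo (a i) (b i), ∃ t ∈ T, R s t
    · have hpos : 0 < b i - a i := by
        obtain ⟨s, hs, -⟩ := hi
        linarith [hs.1, hs.2]
      exact hεrep ⟨hpos, (hab i).2⟩ (a i) (b i) rfl hi
    · exact ⟨0, 0, fun s hs t ht hst => (hi ⟨s, hs, t, ht, hst⟩).elim,
        fun _ => by simp [hδ.le], by simp [hω]⟩
  choose a' b' hcov hlen hcost using hpiece
  have hT : T ⊆ ⋃ p : ℕ × κ, Ioo (a' p.1 p.2) (b' p.1 p.2) := fun t ht => by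
    obtain ⟨s, hs, hst⟩ := hR t ht
    obtain ⟨i, hi⟩ := mem_iUnion.1 (hS hs)
    obtain ⟨j, hj⟩ := hcov i s hi t ht hst
    exact mem_iUnion.2 ⟨(i, j), hj⟩
  calc gaugeContent ω δ T
      ≤ ∑' p : ℕ × κ, ENNReal.ofReal (ω (b' p.1 p.2 - a' p.1 p.2)) :=
        gaugeContent_le_tsum hω hδ.le _ _ hT fun p => hlen p.1 p.2
    _ = ∑' i, ∑' j, ENNReal.ofReal (ω (b' i j - a' i j)) :=
        ENNReal.tsum_prod (f := fun i j => ENNReal.ofReal (ω (b' i j - a' i j)))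
    _ ≤ ∑' i, C * ENNReal.ofReal (ω (b i - a i)) := ENNReal.tsum_le_tsum hcost
    _ = C * ∑' i, ENNReal.ofReal (ω (b i - a i)) := ENNReal.tsum_mul_left

lemma omegaS_zero (s : ℝ) : omegaS s 0 = 0 := by
  simp [omegaS]

lemma omegaS_le_rpow_mul_omegaS {s k ℓ d : ℝ} (hs : 0 ≤ s) (hk : 0 < k) (hℓ : 0 < ℓ)
    (hd : 0 < d) (hd1 : d < 1) (h : -Real.log d ≤ k * -Real.log ℓ) :
    omegaS s ℓ ≤ k ^ s * omegaS s d := by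
  have hL : 0 < -Real.log d := neg_pos.2 (Real.log_neg hd hd1)
  have hM : 0 < -Real.log ℓ := pos_of_mul_pos_right (hL.trans_le h) hk.le
  rw [omegaS, omegaS, if_pos hℓ, if_pos hd]
  calc (-Real.log ℓ) ^ (-s) = k ^ s * (k * -Real.log ℓ) ^ (-s) := by
        rw [Real.mul_rpow hk.le hM.le, Real.rpow_neg hk.le, ← mul_assoc,
          mul_inv_cancel₀ (Real.rpow_pos_of_pos hk s).ne', one_mul]
    _ ≤ k ^ s * (-Real.log d) ^ (-s) := by
        gcongr k ^ s * ?_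
        exact Real.rpow_le_rpow_of_nonpos hL h (neg_nonpos.2 hs)

lemma eventually_omegaS_mul_rpow_le {s K p : ℝ} (hs : 0 ≤ s) (hK : 0 < K) (hp : 1 / 2 ≤ p) :
    ∀ᶠ d in 𝓝[>] 0, omegaS s (K * d ^ p) ≤ 3 ^ s * omegaS s d := by
  have hlog : ∀ᶠ d in 𝓝[>] (0 : ℝ), Real.log d ≤ -(6 * Real.log K) :=
    Real.tendsto_log_nhdsGT_zero.eventually (eventually_le_atBot _)
  filter_upwards [hlog, Ioo_mem_nhdsGT one_pos] with d hlogd ⟨hd0, hd1⟩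
  refine omegaS_le_rpow_mul_omegaS hs three_pos (by positivity) hd0 hd1 ?_
  have hneg : Real.log d < 0 := Real.log_neg hd0 hd1
  rw [Real.log_mul hK.ne' (Real.rpow_pos_of_pos hd0 p).ne', Real.log_rpow hd0]
  nlinarith [mul_nonneg (sub_nonneg.2 hp) (neg_nonneg.2 hneg.le)]

lemma eventually_mul_rpow_le {K p δ : ℝ} (hp : 0 < p) (hδ : 0 < δ) :
    ∀ᶠ d in 𝓝[>] 0, K * d ^ p ≤ δ := by
  have hlim : Tendsto (fun d : ℝ => K * d ^ p) (𝓝[>] 0) (𝓝 0) := by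
    have := ((Real.continuous_rpow_const hp.le).tendsto 0).mono_left
      (nhdsWithin_le_nhds (s := Ioi 0))
    simpa [Real.zero_rpow hp.ne'] using this.const_mul K
  exact hlim.eventually (eventually_le_nhds hδ)

theorem gaugeHaus_omegaS_le_inter_preimage {Spec D : Set ℝ} {N : ℝ → ℝ} {C p s : ℝ}
    (hN : Monotone N) (hD : D ⊆ N '' Spec) (hC : 0 < C) (hp : 1 / 2 ≤ p) (hs : 0 ≤ s)
    (hup : ∀ E ∈ Spec, ∀ ε : ℝ, 0 < ε → ε < 1 → N (E + ε) - N (E - ε) ≤ C * ε ^ p) :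
    gaugeHaus (omegaS s) D ≤
      ENNReal.ofReal (3 ^ s) * gaugeHaus (omegaS s) (Spec ∩ N ⁻¹' D) := by
  refine gaugeHaus_le_mul_of_forall_interval (κ := Unit) (omegaS_zero s)
    (ENNReal.ofReal_pos.2 (by positivity)).ne' ENNReal.ofReal_ne_top
    (fun E x => E ∈ Spec ∧ N E = x) ?_ ?_
  · intro x hx
    obtain ⟨E, hE, rfl⟩ := hD hx
    exact ⟨E, ⟨hE, hx⟩, hE, rfl⟩
  intro δ hδ
  filter_upwards [Ioo_mem_nhdsGT one_pos,
    eventually_mul_rpow_le (K := 4 * C) (p := p) (by linarith) hδ,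
    eventually_omegaS_mul_rpow_le hs (by positivity : 0 < 4 * C) hp]
    with ℓ ⟨hℓ0, hℓ1⟩ hlen hcost a b hab hwit
  obtain ⟨E, hE, -, -, hESpec, -⟩ := hwit
  subst hab
  set r := 2 * C * (b - a) ^ p
  have hr : 0 < r := by positivity
  have hspread : N b - N a < r := by
    have hpos : 0 < C * (b - a) ^ p := by positivity
    calc N b - N a ≤ N (E + (b - a)) - N (E - (b - a)) :=
          sub_le_sub (hN (by linarith [hE.1])) (hN (by linarith [hE.2]))
      _ ≤ C * (b - a) ^ p := hup E hESpec _ hℓ0 hℓ1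
      _ < r := by linarith
  refine ⟨fun _ => N E - r, fun _ => N E + r, ?_, fun _ => ⟨by linarith, ?_⟩, ?_⟩
  · rintro E' hE' _ - ⟨-, rfl⟩
    refine ⟨(), ?_, ?_⟩ <;>
      linarith [hN hE.1.le, hN hE.2.le, hN hE'.1.le, hN hE'.2.le]
  · convert hlen using 1
    ring
  · rw [tsum_fintype, Finset.univ_unique, Finset.sum_singleton,
      ← ENNReal.ofReal_mul (by positivity)]
    convert ENNReal.ofReal_le_ofReal hcost using 3
    ring

lemma le_csInf_add_or_csSup_sub_le {Spec : Set ℝ} {N : ℝ → ℝ} {c q a b ρ x : ℝ}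
    (hN : Monotone N)
    (hlow : ∀ E ∈ Spec, ∀ ε : ℝ, 0 < ε → ε < 1 → c * ε ^ q ≤ N (E + ε) - N (E - ε))
    (hρ0 : 0 < ρ) (hρ1 : ρ < 1) (hρ : b - a ≤ c * ρ ^ q) (hx : x ∈ Spec ∩ N ⁻¹' Ioo a b) :
    x ≤ sInf (Spec ∩ N ⁻¹' Ioo a b) + ρ ∨ sSup (Spec ∩ N ⁻¹' Ioo a b) - ρ ≤ x := by
  set G := Spec ∩ N ⁻¹' Ioo a b
  -- otherwise `N` would grow by `c ρ ^ q ≥ b - a` between two points of `G`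
  by_contra! ⟨hinf, hsup⟩
  obtain ⟨E, hEG, hE⟩ := exists_lt_of_csInf_lt ⟨x, hx⟩ (by linarith : sInf G < x - ρ)
  obtain ⟨E', hE'G, hE'⟩ := exists_lt_of_lt_csSup ⟨x, hx⟩ (by linarith : x + ρ < sSup G)
  have hE'E : N E' - N E < b - a := by linarith [hEG.2.1, hE'G.2.2]
  have := hlow x hx.1 ρ hρ0 hρ1
  linarith [hN (by linarith : x + ρ ≤ E'), hN (by linarith : E ≤ x - ρ)]

theorem gaugeHaus_omegaS_inter_preimage_le {Spec D : Set ℝ} {N : ℝ → ℝ} {c q s : ℝ}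
    (hSpec : Bornology.IsBounded Spec) (hN : Monotone N) (hc : 0 < c) (hq0 : 0 < q)
    (hq : q ≤ 2) (hs : 0 ≤ s)
    (hlow : ∀ E ∈ Spec, ∀ ε : ℝ, 0 < ε → ε < 1 → c * ε ^ q ≤ N (E + ε) - N (E - ε)) :
    gaugeHaus (omegaS s) (Spec ∩ N ⁻¹' D) ≤
      2 * ENNReal.ofReal (3 ^ s) * gaugeHaus (omegaS s) D := by
  refine gaugeHaus_le_mul_of_forall_interval (κ := Bool) (omegaS_zero s)
    (mul_ne_zero two_ne_zero (ENNReal.ofReal_pos.2 (by positivity)).ne')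
    (ENNReal.mul_ne_top ENNReal.ofNat_ne_top ENNReal.ofReal_ne_top)
    (fun x E => N E = x) (fun E hE => ⟨N E, hE.2, rfl⟩) ?_
  intro δ hδ
  set K := 3 / c ^ q⁻¹
  have hqinv : 1 / 2 ≤ q⁻¹ := by rw [one_div]; exact inv_anti₀ hq0 hq
  filter_upwards [Ioo_mem_nhdsGT hc, eventually_mul_rpow_le (K := K) (inv_pos.2 hq0) hδ,
    eventually_omegaS_mul_rpow_le hs (by positivity : 0 < K) hqinv]
    with ℓ ⟨hℓ0, hℓc⟩ hlen hcost a b hab hwit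
  obtain ⟨-, -, E, hE, -⟩ := hwit
  subst hab
  set G := Spec ∩ N ⁻¹' Ioo a b
  set ρ := ((b - a) / c) ^ q⁻¹
  have hρ0 : 0 < ρ := by positivity
  have hρ1 : ρ < 1 := Real.rpow_lt_one (by positivity) ((div_lt_one hc).2 hℓc) (by positivity)
  have hρq : b - a ≤ c * ρ ^ q := by
    rw [Real.rpow_inv_rpow (by positivity) hq0.ne', mul_div_cancel₀ _ hc.ne']
  have hKρ : 3 * ρ = K * (b - a) ^ q⁻¹ := by
    simp only [ρ, K, Real.div_rpow hℓ0.le hc.le]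
    ring
  have hGbdd : Bornology.IsBounded G := hSpec.subset inter_subset_left
  refine ⟨fun j => if j then sInf G - ρ else sSup G - 2 * ρ,
    fun j => (if j then sInf G - ρ else sSup G - 2 * ρ) + 3 * ρ, ?_, fun j => ?_, ?_⟩
  · rintro x hx E' hE' rfl
    have hE'G : E' ∈ G := ⟨hE'.1, hx⟩
    have hinf := csInf_le hGbdd.bddBelow hE'G
    have hsup := le_csSup hGbdd.bddAbove hE'G
    rcases le_csInf_add_or_csSup_sub_le hN hlow hρ0 hρ1 hρq hE'G with h | h
    · exact ⟨true, by simp only [if_true]; constructor <;> linarith⟩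
    · exact ⟨false, by simp only [Bool.false_eq_true, if_false]; constructor <;> linarith⟩
  · rw [add_sub_cancel_left, hKρ]
    exact ⟨by linarith, hlen⟩
  · simp only [tsum_bool, add_sub_cancel_left, ← two_mul, mul_assoc]
    rw [← ENNReal.ofReal_mul (by positivity), hKρ]
    gcongr

theorem gaugeHaus_comparison_IDS_general (Spec : Set ℝ) (hSpec : IsCompact Spec)
    (N : ℝ → ℝ) (hNmono : Monotone N)
    (hNsurj : N '' Spec = Set.Icc (0 : ℝ) 1)
    (c : ℝ) (hc0 : 0 < c)
    (hreg : ∀ E ∈ Spec, ∀ ε : ℝ, 0 < ε → ε < 1 →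
      c * ε ^ (3 / 2 : ℝ) ≤ N (E + ε) - N (E - ε) ∧
      N (E + ε) - N (E - ε) ≤ c⁻¹ * ε ^ (1 / 2 : ℝ))
    (D : Set ℝ) (hD : D ⊆ Set.Icc (0 : ℝ) 1) (s : ℝ) (hs : 0 < s) :
    ENNReal.ofReal ((3 : ℝ) ^ (-s)) * gaugeHaus (omegaS s) D
        ≤ gaugeHaus (omegaS s) (Spec ∩ N ⁻¹' D) ∧
    gaugeHaus (omegaS s) (Spec ∩ N ⁻¹' D)
        ≤ ENNReal.ofReal ((3 : ℝ) ^ (s + 1)) * gaugeHaus (omegaS s) D := by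
  have hlower := gaugeHaus_omegaS_le_inter_preimage hNmono (hD.trans hNsurj.ge) (inv_pos.2 hc0)
    le_rfl hs.le fun E hE ε h0 h1 => (hreg E hE ε h0 h1).2
  have hupper := gaugeHaus_omegaS_inter_preimage_le (D := D) hSpec.isBounded hNmono hc0
    (by norm_num) (by norm_num) hs.le fun E hE ε h0 h1 => (hreg E hE ε h0 h1).1
  constructor
  · calc ENNReal.ofReal (3 ^ (-s)) * gaugeHaus (omegaS s) D
        ≤ ENNReal.ofReal (3 ^ (-s)) * (ENNReal.ofReal (3 ^ s) *
            gaugeHaus (omegaS s) (Spec ∩ N ⁻¹' D)) := by gcongr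
      _ = gaugeHaus (omegaS s) (Spec ∩ N ⁻¹' D) := by
        rw [← mul_assoc, ← ENNReal.ofReal_mul (by positivity), ← Real.rpow_add three_pos,
          neg_add_cancel, Real.rpow_zero, ENNReal.ofReal_one, one_mul]
  · refine hupper.trans (mul_le_mul_left ?_ _)
    rw [← ENNReal.ofReal_ofNat 2, ← ENNReal.ofReal_mul zero_le_two,
      Real.rpow_add_one three_ne_zero]
    exact ENNReal.ofReal_le_ofReal (by nlinarith [Real.rpow_pos_of_pos three_pos s])

/-- Proposition 1.4 (abstract form): if `𝒩` is a continuous non-decreasing function mapping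
the compact set `Σ` onto `[0,1]`, locally constant off `Σ`, and satisfying the two-sided
Hölder bounds `c ε^{3/2} ≤ 𝒩(E+ε) - 𝒩(E-ε) ≤ c⁻¹ ε^{1/2}` on `Σ`, then for
`F = Σ ∩ 𝒩⁻¹(D)` one has `3^{-s} ℋ^{ω_s}(D) ≤ ℋ^{ω_s}(F) ≤ 3^{s+1} ℋ^{ω_s}(D)`. -/
theorem gaugeHaus_comparison_IDS (Spec : Set ℝ) (hSpec : IsCompact Spec)
    (N : ℝ → ℝ) (hNcont : Continuous N) (hNmono : Monotone N)
    (hNsurj : N '' Spec = Set.Icc (0 : ℝ) 1)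
    (hNloc : ∀ x ∉ Spec, ∀ᶠ y in nhds x, N y = N x)
    (c : ℝ) (hc0 : 0 < c) (hc1 : c < 1)
    (hreg : ∀ E ∈ Spec, ∀ ε : ℝ, 0 < ε → ε < 1 →
      c * ε ^ (3 / 2 : ℝ) ≤ N (E + ε) - N (E - ε) ∧
      N (E + ε) - N (E - ε) ≤ c⁻¹ * ε ^ (1 / 2 : ℝ))
    (D : Set ℝ) (hD : D ⊆ Set.Icc (0 : ℝ) 1) (s : ℝ) (hs : 0 < s) :
    ENNReal.ofReal ((3 : ℝ) ^ (-s)) * gaugeHaus (omegaS s) D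
        ≤ gaugeHaus (omegaS s) (Spec ∩ N ⁻¹' D) ∧
    gaugeHaus (omegaS s) (Spec ∩ N ⁻¹' D)
        ≤ ENNReal.ofReal ((3 : ℝ) ^ (s + 1)) * gaugeHaus (omegaS s) D :=
  gaugeHaus_comparison_IDS_general Spec hSpec N hNmono hNsurj c hc0 hreg D hD s hs
end
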